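/- arXiv:2301.08575 — 8 statements merged into one kernel-verified Lean document; each statement's English description precedes it below -/
import Mathlib

section
/- Let α > -1, let n ≥ 1 be an integer, let μ, η ∈ ℂ with |μ| = |η| = 1, let φ : 𝔻 → 𝔻 be analytic, and let ψ be analytic on 𝔻 and not identically zero. Suppose that for all z, w ∈ 𝔻, μ·p·ψ(z)·(ηw)^n / (1 - ηw·φ(z))^{n+α+2} = μ·p·ψ(w)·(ηz)^n / (1 - η·φ(w)·z)^{n+α+2}. Then, with b = φ(0) ∈ 𝔻, there exist a, c ∈ ℂ such that for all z ∈ 𝔻, ψ(z) = a·z^n / (1 - ηbz)^{n+α+2} and φ(z) = b + cz/(1 - ηbz). -/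
/-!
Write `s = n + α + 2` and `b = φ 0`. Cross-multiplied, the kernel identity says
`ψ(w)/wⁿ = (ψ(z)/zⁿ) (1 - ηφ(w)z)^s / (1 - ηφ(z)w)^s` for `z, w ≠ 0`; letting `w → 0` gives
`ψ(z) (1 - ηbz)^s = a zⁿ`, where `a` is the limit of `ψ(w)/wⁿ`. Substituting this back yields
`(1 - ηφ(w)z)^s (1 - ηbw)^s = (1 - ηφ(z)w)^s (1 - ηbz)^s`. All bases lie in the right
half-plane, so both sides are exponentials of continuous branches `s (log + log)`, whose
difference takes values in `2πiℤ`; on the connected disk it is constant, and it vanishes at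
`w = 0`. Hence `(1 - ηφ(w)z)(1 - ηbw) = (1 - ηφ(z)w)(1 - ηbz)`, and fixing `w = 1/2` solves
this for `φ(z)`.
-/

open Complex Set Filter Topology

theorem IsPreconnected.eqOn_of_exp_eqOn {X : Type*} [TopologicalSpace X] {S : Set X}
    (hS : IsPreconnected S) {f g : X → ℂ} (hf : ContinuousOn f S) (hg : ContinuousOn g S)
    (hfg : ∀ x ∈ S, exp (f x) = exp (g x)) {x₀ : X} (hx₀ : x₀ ∈ S) (h₀ : f x₀ = g x₀) :
    EqOn f g S := by
  intro x hx
  have hmaps : MapsTo (f - g) S (AddSubgroup.zmultiples (2 * Real.pi * I)) := by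
    intro y hy
    obtain ⟨k, hk⟩ := exp_eq_exp_iff_exists_int.mp (hfg y hy)
    exact ⟨k, by simp [hk]⟩
  have h := hS.constant_of_mapsTo
    (isDiscrete_iff_discreteTopology.mpr (NormedSpace.discreteTopology_zmultiples _))
    (hf.sub hg) hmaps hx hx₀
  simpa [h₀, sub_eq_zero] using h

theorem Complex.re_one_sub_pos {u : ℂ} (hu : ‖u‖ < 1) : 0 < (1 - u).re := by
  simpa using (re_le_norm u).trans_lt hu

theorem Complex.ofReal_add_two_add_natCast_ne_zero {x : ℝ} (hx : -2 < x) (j : ℕ) :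
    (x : ℂ) + 2 + j ≠ 0 := fun h => by
  have := congrArg re h
  simp only [add_re, natCast_re, ofReal_re, re_ofNat, zero_re] at this
  linarith [j.cast_nonneg (α := ℝ)]

theorem mul_pow_mul_eq_of_div_eq {c η A B D E z w : ℂ} {n : ℕ} (hc : c ≠ 0) (hη : η ≠ 0)
    (hD : D ≠ 0) (hE : E ≠ 0) (h : c * A * (η * w) ^ n / D = c * B * (η * z) ^ n / E) :
    A * w ^ n * E = B * z ^ n * D := by
  rw [div_eq_div_iff hD hE] at h
  exact mul_left_cancel₀ (mul_ne_zero hc (pow_ne_zero n hη)) (by linear_combination h)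

theorem exists_mul_eq_mul_pow_of_symm {ψ : ℂ → ℂ} {k : ℂ → ℂ → ℂ} {n : ℕ} (hn : n ≠ 0)
    {S : Set ℂ} (hS : S ∈ 𝓝 0) (hk : ∀ z ∈ S, ∀ w ∈ S, k z w ≠ 0)
    (hk_cont : ∀ z ∈ S, ContinuousAt (k z) 0 ∧ ContinuousAt (k · z) 0)
    (hsymm : ∀ z ∈ S, ∀ w ∈ S, ψ z * w ^ n * k z w = ψ w * z ^ n * k w z) :
    ∃ a, ∀ z ∈ S, ψ z * k z 0 = a * z ^ n * k 0 z := by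
  have hS' : ∀ᶠ w in 𝓝[≠] 0, w ∈ S ∧ w ≠ 0 :=
    (eventually_nhdsWithin_of_eventually_nhds hS).and self_mem_nhdsWithin
  obtain ⟨z₁, hz₁, hz₁0⟩ := hS'.exists
  have hψ0 : ψ 0 = 0 := by
    have h := hsymm 0 (mem_of_mem_nhds hS) z₁ hz₁
    simpa [zero_pow hn, hk 0 (mem_of_mem_nhds hS) z₁ hz₁, hz₁0] using h
  have hlim : ∀ z ∈ S, z ≠ 0 → Tendsto (fun w => ψ w / w ^ n) (𝓝[≠] 0)
      (𝓝 (ψ z * k z 0 / (z ^ n * k 0 z))) := by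
    intro z hz hz0
    have hcont : Tendsto (fun w => ψ z * k z w / (z ^ n * k w z)) (𝓝 0)
        (𝓝 (ψ z * k z 0 / (z ^ n * k 0 z))) :=
      ((hk_cont z hz).1.const_mul _).div ((hk_cont z hz).2.const_mul _)
        (mul_ne_zero (pow_ne_zero _ hz0) (hk 0 (mem_of_mem_nhds hS) z hz))
    refine (hcont.mono_left nhdsWithin_le_nhds).congr' ?_
    filter_upwards [hS'] with w ⟨hw, hw0⟩
    rw [div_eq_div_iff (mul_ne_zero (pow_ne_zero _ hz0) (hk w hw z hz)) (pow_ne_zero _ hw0)]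
    linear_combination hsymm z hz w hw
  refine ⟨ψ z₁ * k z₁ 0 / (z₁ ^ n * k 0 z₁), fun z hz => ?_⟩
  rcases eq_or_ne z 0 with rfl | hz0
  · simp [hψ0, zero_pow hn]
  · rw [tendsto_nhds_unique (hlim z₁ hz₁ hz₁0) (hlim z hz hz0)]
    field_simp [pow_ne_zero _ hz0, hk 0 (mem_of_mem_nhds hS) z hz]

theorem kernel_cyclic_of_symm {ψ : ℂ → ℂ} {k : ℂ → ℂ → ℂ} {n : ℕ} {S : Set ℂ} {a : ℂ}
    (hsymm : ∀ z ∈ S, ∀ w ∈ S, ψ z * w ^ n * k z w = ψ w * z ^ n * k w z)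
    (ha : ∀ z ∈ S, ψ z * k z 0 = a * z ^ n * k 0 z) (ha0 : a ≠ 0) {z w : ℂ} (hz : z ∈ S)
    (hw : w ∈ S) : k 0 z * k z w * k w 0 = k 0 w * k w z * k z 0 := by
  rcases eq_or_ne z 0 with rfl | hz0
  · ring
  rcases eq_or_ne w 0 with rfl | hw0
  · ring
  apply mul_left_cancel₀ (mul_ne_zero (mul_ne_zero ha0 (pow_ne_zero n hz0)) (pow_ne_zero n hw0))
  linear_combination (-(w ^ n * k z w * k w 0)) * ha z hz + (k z 0 * k w 0) * hsymm z hz w hw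
    + (z ^ n * k w z * k z 0) * ha w hw

theorem eq_add_mul_div_of_mul_eq {η b v v₁ w₁ z : ℂ} (hη : η ≠ 0) (hw₁ : w₁ ≠ 0)
    (hz : 1 - η * b * z ≠ 0)
    (h : (1 - η * v₁ * z) * (1 - η * b * w₁) = (1 - η * v * w₁) * (1 - η * b * z)) :
    v = b + ((v₁ * (1 - η * b * w₁) - b) / w₁ + η * b ^ 2) * z / (1 - η * b * z) := by
  rw [← sub_eq_iff_eq_add', eq_div_iff hz]
  field_simp
  apply mul_left_cancel₀ hη
  linear_combination h

local notation "𝔻" => Metric.ball (0 : ℂ) 1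

section Kernel

variable {η : ℂ} {φ : ℂ → ℂ}

theorem re_one_sub_mul_pos (hη : ‖η‖ = 1) (hφ : MapsTo φ 𝔻 𝔻) {z w : ℂ} (hz : z ∈ 𝔻)
    (hw : w ∈ 𝔻) : 0 < (1 - η * φ w * z).re := by
  refine re_one_sub_pos ?_
  rw [norm_mul, norm_mul, hη, one_mul]
  exact mul_lt_one_of_nonneg_of_lt_one_left (norm_nonneg _) (mem_ball_zero_iff.mp (hφ hw))
    (mem_ball_zero_iff.mp hz).le

theorem one_sub_mul_mem_slitPlane (hη : ‖η‖ = 1) (hφ : MapsTo φ 𝔻 𝔻) {z w : ℂ} (hz : z ∈ 𝔻)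
    (hw : w ∈ 𝔻) : 1 - η * φ w * z ∈ slitPlane :=
  Or.inl (re_one_sub_mul_pos hη hφ hz hw)

theorem one_sub_mul_cpow_ne_zero (hη : ‖η‖ = 1) (hφ : MapsTo φ 𝔻 𝔻) (s : ℂ) {z w : ℂ}
    (hz : z ∈ 𝔻) (hw : w ∈ 𝔻) : (1 - η * φ w * z) ^ s ≠ 0 :=
  cpow_ne_zero_iff.mpr (Or.inl (slitPlane_ne_zero (one_sub_mul_mem_slitPlane hη hφ hz hw)))

theorem continuousAt_one_sub_mul_cpow (hη : ‖η‖ = 1) (hφc : ContinuousOn φ 𝔻)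
    (hφ : MapsTo φ 𝔻 𝔻) (s : ℂ) {z : ℂ} (hz : z ∈ 𝔻) :
    ContinuousAt (fun w => (1 - η * φ w * z) ^ s) 0 ∧
      ContinuousAt (fun w => (1 - η * φ z * w) ^ s) 0 := by
  have h0 : (0 : ℂ) ∈ 𝔻 := Metric.mem_ball_self one_pos
  have hφ0 : ContinuousAt φ 0 := hφc.continuousAt (Metric.ball_mem_nhds 0 one_pos)
  exact ⟨(continuousAt_const.sub ((continuousAt_const.mul hφ0).mul continuousAt_const)).cpow
      continuousAt_const (one_sub_mul_mem_slitPlane hη hφ hz h0),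
    (continuousAt_const.sub (continuousAt_const.mul continuousAt_id)).cpow
      continuousAt_const (one_sub_mul_mem_slitPlane hη hφ h0 hz)⟩

theorem one_sub_mul_symm_of_cpow {s : ℂ} (hs : s ≠ 0) (hη : ‖η‖ = 1) (hφc : ContinuousOn φ 𝔻)
    (hφ : MapsTo φ 𝔻 𝔻)
    (h : ∀ z ∈ 𝔻, ∀ w ∈ 𝔻, (1 - η * φ w * z) ^ s * (1 - η * φ 0 * w) ^ s
      = (1 - η * φ z * w) ^ s * (1 - η * φ 0 * z) ^ s)
    {z w : ℂ} (hz : z ∈ 𝔻) (hw : w ∈ 𝔻) :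
    (1 - η * φ w * z) * (1 - η * φ 0 * w) = (1 - η * φ z * w) * (1 - η * φ 0 * z) := by
  have h0 : (0 : ℂ) ∈ 𝔻 := Metric.mem_ball_self one_pos
  have hslit {u v : ℂ} (hu : u ∈ 𝔻) (hv : v ∈ 𝔻) := one_sub_mul_mem_slitPlane hη hφ hu hv
  set L : ℂ → ℂ := fun w => log (1 - η * φ w * z) + log (1 - η * φ 0 * w)
  set R : ℂ → ℂ := fun w => log (1 - η * φ z * w) + log (1 - η * φ 0 * z)
  have hL : ContinuousOn L 𝔻 :=
    ((continuousOn_const.sub ((continuousOn_const.mul hφc).mul continuousOn_const)).clog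
      fun u hu => hslit hz hu).add
    ((continuousOn_const.sub (continuousOn_const.mul continuousOn_id)).clog
      fun u hu => hslit hu h0)
  have hR : ContinuousOn R 𝔻 :=
    ((continuousOn_const.sub (continuousOn_const.mul continuousOn_id)).clog
      fun u hu => hslit hu hz).add continuousOn_const
  have hLR : EqOn (fun w => L w * s) (fun w => R w * s) 𝔻 := by
    refine (convex_ball (0 : ℂ) 1).isPreconnected.eqOn_of_exp_eqOn (hL.mul continuousOn_const)
      (hR.mul continuousOn_const) (fun u hu => ?_) h0 (by simp [L, R])
    simp only [L, R, add_mul, exp_add]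
    rw [← cpow_def_of_ne_zero (slitPlane_ne_zero (hslit hz hu)),
      ← cpow_def_of_ne_zero (slitPlane_ne_zero (hslit hu h0)),
      ← cpow_def_of_ne_zero (slitPlane_ne_zero (hslit hu hz)),
      ← cpow_def_of_ne_zero (slitPlane_ne_zero (hslit hz h0))]
    exact h z hz u hu
  have hexp := congrArg exp (mul_right_cancel₀ hs (hLR hw))
  simp only [L, R, exp_add] at hexp
  rwa [exp_log (slitPlane_ne_zero (hslit hz hw)), exp_log (slitPlane_ne_zero (hslit hw h0)),
    exp_log (slitPlane_ne_zero (hslit hw hz)), exp_log (slitPlane_ne_zero (hslit hz h0))] at hexp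

end Kernel

theorem stmt0_general (α : ℝ) (hα : -1 < α) (n : ℕ) (hn : 1 ≤ n) (μ η : ℂ)
    (hμ : ‖μ‖ = 1) (hη : ‖η‖ = 1)
    (φ ψ : ℂ → ℂ)
    (hφ : DifferentiableOn ℂ φ (Metric.ball (0 : ℂ) 1))
    (hφmap : ∀ z ∈ Metric.ball (0 : ℂ) 1, φ z ∈ Metric.ball (0 : ℂ) 1)
    (hψne : ∃ z ∈ Metric.ball (0 : ℂ) 1, ψ z ≠ 0)
    (p : ℂ) (hp : p = ∏ j ∈ Finset.range n, ((α : ℂ) + 2 + j))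
    (heq : ∀ z ∈ Metric.ball (0 : ℂ) 1, ∀ w ∈ Metric.ball (0 : ℂ) 1,
      μ * p * ψ z * (η * w) ^ n / (1 - η * w * φ z) ^ ((n : ℂ) + α + 2)
        = μ * p * ψ w * (η * z) ^ n / (1 - η * φ w * z) ^ ((n : ℂ) + α + 2)) :
    ∃ a c : ℂ, ∀ z ∈ Metric.ball (0 : ℂ) 1,
      ψ z = a * z ^ n / (1 - η * φ 0 * z) ^ ((n : ℂ) + α + 2) ∧
      φ z = φ 0 + c * z / (1 - η * φ 0 * z) := by
  set s : ℂ := (n : ℂ) + α + 2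
  have hη0 : η ≠ 0 := by simp [← norm_ne_zero_iff, hη]
  have h0 : (0 : ℂ) ∈ 𝔻 := Metric.mem_ball_self one_pos
  have hw₁ : (2 : ℂ)⁻¹ ∈ 𝔻 := by rw [mem_ball_zero_iff]; norm_num
  have hs : s ≠ 0 := by
    rw [show s = α + 2 + n by ring]
    exact ofReal_add_two_add_natCast_ne_zero (by linarith) n
  have hK : ∀ z ∈ 𝔻, ∀ w ∈ 𝔻, (1 - η * φ w * z) ^ s ≠ 0 :=
    fun z hz w hw => one_sub_mul_cpow_ne_zero hη hφmap s hz hw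
  have hμp : μ * p ≠ 0 := mul_ne_zero (by simp [← norm_ne_zero_iff, hμ]) <|
    hp ▸ Finset.prod_ne_zero_iff.mpr fun j _ => ofReal_add_two_add_natCast_ne_zero (by linarith) j
  have hsymm : ∀ z ∈ 𝔻, ∀ w ∈ 𝔻,
      ψ z * w ^ n * (1 - η * φ w * z) ^ s = ψ w * z ^ n * (1 - η * φ z * w) ^ s :=
    fun z hz w hw => mul_pow_mul_eq_of_div_eq hμp hη0 (hK w hw z hz) (hK z hz w hw) <| by
      simpa only [mul_right_comm η w] using heq z hz w hw
  obtain ⟨a, ha⟩ := exists_mul_eq_mul_pow_of_symm (k := fun z w => (1 - η * φ w * z) ^ s)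
    (by omega) (Metric.ball_mem_nhds 0 one_pos) hK
    (fun z hz => continuousAt_one_sub_mul_cpow hη hφ.continuousOn hφmap s hz) hsymm
  have ha0 : a ≠ 0 := by
    obtain ⟨z, hz, hψz⟩ := hψne
    rintro rfl
    simpa [hK z hz 0 h0, hψz] using ha z hz
  have hkernel : ∀ z ∈ 𝔻, ∀ w ∈ 𝔻, (1 - η * φ w * z) ^ s * (1 - η * φ 0 * w) ^ s
      = (1 - η * φ z * w) ^ s * (1 - η * φ 0 * z) ^ s := fun z hz w hw => by
    simpa using kernel_cyclic_of_symm hsymm ha ha0 hz hw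
  refine ⟨a, (φ 2⁻¹ * (1 - η * φ 0 * 2⁻¹) - φ 0) / 2⁻¹ + η * φ 0 ^ 2, fun z hz => ⟨?_, ?_⟩⟩
  · rw [eq_div_iff (hK z hz 0 h0)]
    simpa using ha z hz
  · exact eq_add_mul_div_of_mul_eq hη0 (by norm_num)
      (slitPlane_ne_zero (one_sub_mul_mem_slitPlane hη hφmap hz h0))
      (one_sub_mul_symm_of_cpow hs hη hφ.continuousOn hφmap hkernel hz hw₁)

/-- Theorem 2.1 (forward direction): if the reproducing-kernel identity for
complex symmetry of `D_{n,ψ,φ}` with conjugation `C_{μ,η}` holds on the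
weighted Bergman space `A²_α`, then `ψ` and `φ` have the stated forms. -/
theorem stmt0 (α : ℝ) (hα : -1 < α) (n : ℕ) (hn : 1 ≤ n) (μ η : ℂ)
    (hμ : ‖μ‖ = 1) (hη : ‖η‖ = 1)
    (φ ψ : ℂ → ℂ)
    (hφ : DifferentiableOn ℂ φ (Metric.ball (0 : ℂ) 1))
    (hφmap : ∀ z ∈ Metric.ball (0 : ℂ) 1, φ z ∈ Metric.ball (0 : ℂ) 1)
    (hψ : DifferentiableOn ℂ ψ (Metric.ball (0 : ℂ) 1))
    (hψne : ∃ z ∈ Metric.ball (0 : ℂ) 1, ψ z ≠ 0)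
    (p : ℂ) (hp : p = ∏ j ∈ Finset.range n, ((α : ℂ) + 2 + j))
    (heq : ∀ z ∈ Metric.ball (0 : ℂ) 1, ∀ w ∈ Metric.ball (0 : ℂ) 1,
      μ * p * ψ z * (η * w) ^ n / (1 - η * w * φ z) ^ ((n : ℂ) + α + 2)
        = μ * p * ψ w * (η * z) ^ n / (1 - η * φ w * z) ^ ((n : ℂ) + α + 2)) :
    ∃ a c : ℂ, ∀ z ∈ Metric.ball (0 : ℂ) 1,
      ψ z = a * z ^ n / (1 - η * φ 0 * z) ^ ((n : ℂ) + α + 2) ∧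
      φ z = φ 0 + c * z / (1 - η * φ 0 * z) :=
  stmt0_general α hα n hn μ η hμ hη φ ψ hφ hφmap hψne p hp heq
end

section
/- Let α > -1, let n ≥ 1 be an integer, let μ, η ∈ ℂ with |μ| = |η| = 1, let a, c ∈ ℂ and b ∈ 𝔻, and suppose φ : 𝔻 → 𝔻 is the analytic self-map given by φ(z) = b + cz/(1 - ηbz) and ψ(z) = a·z^n / (1 - ηbz)^{n+α+2} for z ∈ 𝔻. Then for all z, w ∈ 𝔻, μ·p·ψ(z)·(ηw)^n / (1 - ηw·φ(z))^{n+α+2} = μ·p·ψ(w)·(ηz)^n / (1 - η·φ(w)·z)^{n+α+2}; in fact both sides equal a·μ·p·(η z w)^n / (1 - ηbz - ηbw + η²b²zw - ηczw)^{n+α+2}. -/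
/-! With `u = 1 - ηbz` and `v = 1 - ηwφ(z)`, clearing the denominator of `φ` gives
`u · v = 1 - ηbz - ηbw + η²b²zw - ηczw`, an expression symmetric in `z` and `w`. Both `u` and
`v` lie in the right half-plane, where the principal power is multiplicative:
`u ^ s · v ^ s = (u v) ^ s`. Hence the left-hand side equals `a μ p (ηzw)ⁿ / (u v) ^ s`, and the
symmetry of this value in `z, w` is the first identity. -/

namespace Complex

open Real Set

theorem mul_cpow_of_arg_add_mem_Ioc {x y : ℂ} (hx : x ≠ 0) (hy : y ≠ 0)
    (harg : arg x + arg y ∈ Ioc (-π) π) (s : ℂ) : (x * y) ^ s = x ^ s * y ^ s := by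
  rw [cpow_def_of_ne_zero (mul_ne_zero hx hy), cpow_def_of_ne_zero hx, cpow_def_of_ne_zero hy,
    log_mul hx hy harg, add_mul, exp_add]

theorem mul_cpow_of_re_pos {x y : ℂ} (hx : 0 < x.re) (hy : 0 < y.re) (s : ℂ) :
    (x * y) ^ s = x ^ s * y ^ s := by
  have hx' := abs_lt.mp (abs_arg_lt_pi_div_two_iff.mpr (Or.inl hx))
  have hy' := abs_lt.mp (abs_arg_lt_pi_div_two_iff.mpr (Or.inl hy))
  refine mul_cpow_of_arg_add_mem_Ioc (fun h => by simp [h] at hx) (fun h => by simp [h] at hy)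
    ⟨?_, ?_⟩ s <;> linarith [pi_pos]

theorem re_one_sub_mul_mul_pos {η x y : ℂ} (hη : ‖η‖ = 1) (hx : ‖x‖ < 1) (hy : ‖y‖ < 1) :
    0 < (1 - η * x * y).re := by
  have hxy : ‖η * x * y‖ < 1 := by
    rw [norm_mul, norm_mul, hη, one_mul]
    exact mul_lt_one_of_nonneg_of_lt_one_left (norm_nonneg x) hx hy.le
  have := re_le_norm (η * x * y)
  rw [sub_re, one_re]
  linarith

end Complex

section Kernel

variable (η b c z w : ℂ)

theorem one_sub_mul_one_sub_linearFractional (hz : 1 - η * b * z ≠ 0) :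
    (1 - η * b * z) * (1 - η * w * (b + c * z / (1 - η * b * z)))
      = 1 - η * b * z - η * b * w + η ^ 2 * b ^ 2 * z * w - η * c * z * w := by
  field_simp
  ring

theorem kernel_product_eq (a μ p s : ℂ) (n : ℕ) {φz : ℂ}
    (hφz : φz = b + c * z / (1 - η * b * z))
    (hu : 0 < (1 - η * b * z).re) (hv : 0 < (1 - η * w * φz).re) :
    μ * p * (a * z ^ n / (1 - η * b * z) ^ s) * (η * w) ^ n / (1 - η * w * φz) ^ s
      = a * μ * p * (η * z * w) ^ n /
          (1 - η * b * z - η * b * w + η ^ 2 * b ^ 2 * z * w - η * c * z * w) ^ s := by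
  have hu0 : 1 - η * b * z ≠ 0 := fun h => by simp [h] at hu
  have hv0 : 1 - η * w * φz ≠ 0 := fun h => by simp [h] at hv
  rw [← one_sub_mul_one_sub_linearFractional η b c z w hu0, ← hφz,
    Complex.mul_cpow_of_re_pos hu hv]
  have hus : (1 - η * b * z) ^ s ≠ 0 := by simp [Complex.cpow_eq_zero_iff, hu0]
  have hvs : (1 - η * w * φz) ^ s ≠ 0 := by simp [Complex.cpow_eq_zero_iff, hv0]
  field_simp
  ring

end Kernel

theorem stmt1_general (α : ℝ) (n : ℕ) (μ η a c b : ℂ)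
    (hη : ‖η‖ = 1)
    (hb : b ∈ Metric.ball (0 : ℂ) 1)
    (φ ψ : ℂ → ℂ)
    (hφdef : ∀ z ∈ Metric.ball (0 : ℂ) 1, φ z = b + c * z / (1 - η * b * z))
    (hφmap : ∀ z ∈ Metric.ball (0 : ℂ) 1, φ z ∈ Metric.ball (0 : ℂ) 1)
    (hψdef : ∀ z ∈ Metric.ball (0 : ℂ) 1,
      ψ z = a * z ^ n / (1 - η * b * z) ^ ((n : ℂ) + α + 2))
    (p : ℂ) :
    ∀ z ∈ Metric.ball (0 : ℂ) 1, ∀ w ∈ Metric.ball (0 : ℂ) 1,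
      μ * p * ψ z * (η * w) ^ n / (1 - η * w * φ z) ^ ((n : ℂ) + α + 2)
        = μ * p * ψ w * (η * z) ^ n / (1 - η * φ w * z) ^ ((n : ℂ) + α + 2) ∧
      μ * p * ψ z * (η * w) ^ n / (1 - η * w * φ z) ^ ((n : ℂ) + α + 2)
        = a * μ * p * (η * z * w) ^ n /
            (1 - η * b * z - η * b * w + η ^ 2 * b ^ 2 * z * w - η * c * z * w) ^
              ((n : ℂ) + α + 2) := by
  have value : ∀ z ∈ Metric.ball (0 : ℂ) 1, ∀ w ∈ Metric.ball (0 : ℂ) 1,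
      μ * p * ψ z * (η * w) ^ n / (1 - η * w * φ z) ^ ((n : ℂ) + α + 2)
        = a * μ * p * (η * z * w) ^ n /
            (1 - η * b * z - η * b * w + η ^ 2 * b ^ 2 * z * w - η * c * z * w) ^
              ((n : ℂ) + α + 2) := by
    intro z hz w hw
    rw [hψdef z hz]
    exact kernel_product_eq η b c z w a μ p _ n (hφdef z hz)
      (Complex.re_one_sub_mul_mul_pos hη (mem_ball_zero_iff.mp hb) (mem_ball_zero_iff.mp hz))
      (Complex.re_one_sub_mul_mul_pos hη (mem_ball_zero_iff.mp hw)
        (mem_ball_zero_iff.mp (hφmap z hz)))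
  intro z hz w hw
  refine ⟨?_, value z hz w hw⟩
  rw [value z hz w hw, mul_right_comm η (φ w) z, value w hw z hz]
  ring_nf

/-- Theorem 2.1 (converse direction): for symbols `ψ, φ` of the stated form, the
reproducing-kernel identity for complex symmetry with conjugation `C_{μ,η}` holds,
and both sides have the indicated common value. -/
theorem stmt1 (α : ℝ) (hα : -1 < α) (n : ℕ) (hn : 1 ≤ n) (μ η a c b : ℂ)
    (hμ : ‖μ‖ = 1) (hη : ‖η‖ = 1)
    (hb : b ∈ Metric.ball (0 : ℂ) 1)
    (φ ψ : ℂ → ℂ)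
    (hφdef : ∀ z ∈ Metric.ball (0 : ℂ) 1, φ z = b + c * z / (1 - η * b * z))
    (hφmap : ∀ z ∈ Metric.ball (0 : ℂ) 1, φ z ∈ Metric.ball (0 : ℂ) 1)
    (hψdef : ∀ z ∈ Metric.ball (0 : ℂ) 1,
      ψ z = a * z ^ n / (1 - η * b * z) ^ ((n : ℂ) + α + 2))
    (p : ℂ) (hp : p = ∏ j ∈ Finset.range n, ((α : ℂ) + 2 + j)) :
    ∀ z ∈ Metric.ball (0 : ℂ) 1, ∀ w ∈ Metric.ball (0 : ℂ) 1,
      μ * p * ψ z * (η * w) ^ n / (1 - η * w * φ z) ^ ((n : ℂ) + α + 2)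
        = μ * p * ψ w * (η * z) ^ n / (1 - η * φ w * z) ^ ((n : ℂ) + α + 2) ∧
      μ * p * ψ z * (η * w) ^ n / (1 - η * w * φ z) ^ ((n : ℂ) + α + 2)
        = a * μ * p * (η * z * w) ^ n /
            (1 - η * b * z - η * b * w + η ^ 2 * b ^ 2 * z * w - η * c * z * w) ^
              ((n : ℂ) + α + 2) :=
  stmt1_general α n μ η a c b hη hb φ ψ hφdef hφmap hψdef p
end

section
/- Let α > -1, let n ≥ 1 be an integer, let μ, η ∈ ℂ with |μ| = |η| = 1, let φ : 𝔻 → 𝔻 be analytic, let m ≥ 1 be an integer, and let g be analytic on 𝔻 with g(0) ≠ 0. Define ψ(z) = z^m·g(z). If for all z, w ∈ 𝔻, μ·p·ψ(z)·(ηw)^n / (1 - ηw·φ(z))^{n+α+2} = μ·p·ψ(w)·(ηz)^n / (1 - η·φ(w)·z)^{n+α+2}, then m = n. -/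
open Filter Topology

/-!
Fix `w ≠ 0` in the disc with `g w ≠ 0` and clear denominators in the identity. It becomes
`z ^ m * u z = z ^ n * v z` near `0`, where `u` and `v` are continuous at `0` and do not vanish
there: `u` carries `g z` and `(1 - η φ(w) z) ^ s`, `v` carries `ψ w` and `(1 - η w φ(z)) ^ s`,
and the powers have a base in the slit plane. Comparing the orders of vanishing at `0` gives
`m = n`.
-/

section PowMul

variable {𝕜 : Type*} [NontriviallyNormedField 𝕜] {u v : 𝕜 → 𝕜} {m n : ℕ}

theorem le_of_eventually_pow_mul_eq (hu : ContinuousAt u 0) (hv : ContinuousAt v 0)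
    (hu0 : u 0 ≠ 0) (h : ∀ᶠ z in 𝓝 0, z ^ m * u z = z ^ n * v z) : n ≤ m := by
  by_contra! hmn
  have hlim : Tendsto (fun z => z ^ (n - m) * v z) (𝓝 0) (𝓝 0) := by
    have hc : ContinuousAt (fun z => z ^ (n - m) * v z) 0 := (continuousAt_id.pow _).mul hv
    simpa [zero_pow (Nat.sub_ne_zero_of_lt hmn)] using hc.tendsto
  have hquot : ∀ᶠ z in 𝓝[≠] 0, z ^ (n - m) * v z = u z := by
    filter_upwards [nhdsWithin_le_nhds h, self_mem_nhdsWithin] with z hz hz0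
    refine (mul_left_cancel₀ (pow_ne_zero m hz0) ?_).symm
    rw [hz, ← mul_assoc, ← pow_add, Nat.add_sub_cancel' hmn.le]
  exact hu0 (tendsto_nhds_unique (hu.tendsto.mono_left nhdsWithin_le_nhds)
    ((hlim.mono_left nhdsWithin_le_nhds).congr' hquot))

theorem eq_of_eventually_pow_mul_eq (hu : ContinuousAt u 0) (hv : ContinuousAt v 0)
    (hu0 : u 0 ≠ 0) (hv0 : v 0 ≠ 0) (h : ∀ᶠ z in 𝓝 0, z ^ m * u z = z ^ n * v z) : m = n :=
  le_antisymm (le_of_eventually_pow_mul_eq hv hu hv0 (h.mono fun _ hz => hz.symm))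
    (le_of_eventually_pow_mul_eq hu hv hu0 h)

end PowMul

theorem ContinuousAt.exists_mem_ne_apply_ne {X Y : Type*} [TopologicalSpace X]
    [TopologicalSpace Y] [T1Space Y] {f : X → Y} {x : X} [(𝓝[≠] x).NeBot] {s : Set X} {y : Y}
    (hf : ContinuousAt f x) (hfx : f x ≠ y) (hs : s ∈ 𝓝 x) : ∃ x' ∈ s, x' ≠ x ∧ f x' ≠ y := by
  obtain ⟨x', ⟨hfx', hx's⟩, hx'⟩ :=
    ((((hf.eventually_ne hfx).and hs).filter_mono nhdsWithin_le_nhds).and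
      (self_mem_nhdsWithin (s := {x}ᶜ))).exists
  exact ⟨x', hx's, hx', hfx'⟩

theorem norm_mul_mul_lt_one {𝕜 : Type*} [NormedDivisionRing 𝕜] {η a b : 𝕜} (hη : ‖η‖ = 1)
    (ha : ‖a‖ < 1) (hb : ‖b‖ < 1) : ‖η * a * b‖ < 1 := by
  rw [norm_mul, norm_mul, hη, one_mul]
  exact mul_lt_one_of_nonneg_of_lt_one_left (norm_nonneg a) ha hb.le

namespace Complex

theorem one_sub_mem_slitPlane {c : ℂ} (hc : ‖c‖ < 1) : 1 - c ∈ slitPlane := by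
  simpa [sub_eq_add_neg] using mem_slitPlane_of_norm_lt_one (z := -c) (by rwa [norm_neg])

theorem one_sub_cpow_ne_zero {c : ℂ} (hc : ‖c‖ < 1) (s : ℂ) : (1 - c) ^ s ≠ 0 :=
  cpow_ne_zero_iff.mpr (Or.inl (slitPlane_ne_zero (one_sub_mem_slitPlane hc)))

theorem prod_range_ofReal_add_two_add_ne_zero {α : ℝ} (hα : -1 < α) (n : ℕ) :
    ∏ j ∈ Finset.range n, ((α : ℂ) + 2 + j) ≠ 0 :=
  Finset.prod_ne_zero_iff.mpr fun j _ => by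
    have hpos : 0 < α + 2 + j := by linarith [j.cast_nonneg (α := ℝ)]
    exact_mod_cast hpos.ne'

end Complex

theorem stmt3_general (α : ℝ) (hα : -1 < α) (n : ℕ) (μ η : ℂ)
    (hμ : ‖μ‖ = 1) (hη : ‖η‖ = 1)
    (φ g : ℂ → ℂ)
    (hφ : DifferentiableOn ℂ φ (Metric.ball (0 : ℂ) 1))
    (hφmap : ∀ z ∈ Metric.ball (0 : ℂ) 1, φ z ∈ Metric.ball (0 : ℂ) 1)
    (hg : DifferentiableOn ℂ g (Metric.ball (0 : ℂ) 1))
    (hg0 : g 0 ≠ 0)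
    (m : ℕ)
    (ψ : ℂ → ℂ) (hψdef : ∀ z ∈ Metric.ball (0 : ℂ) 1, ψ z = z ^ m * g z)
    (p : ℂ) (hp : p = ∏ j ∈ Finset.range n, ((α : ℂ) + 2 + j))
    (heq : ∀ z ∈ Metric.ball (0 : ℂ) 1, ∀ w ∈ Metric.ball (0 : ℂ) 1,
      μ * p * ψ z * (η * w) ^ n / (1 - η * w * φ z) ^ ((n : ℂ) + α + 2)
        = μ * p * ψ w * (η * z) ^ n / (1 - η * φ w * z) ^ ((n : ℂ) + α + 2)) :
    m = n := by
  set s : ℂ := (n : ℂ) + α + 2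
  have hball : Metric.ball (0 : ℂ) 1 ∈ 𝓝 0 := Metric.ball_mem_nhds 0 one_pos
  have hgc : ContinuousAt g 0 := hg.continuousOn.continuousAt hball
  have hφc : ContinuousAt φ 0 := hφ.continuousOn.continuousAt hball
  obtain ⟨w, hw, hw0, hgw⟩ := hgc.exists_mem_ne_apply_ne hg0 hball
  have hnorm : ∀ a ∈ Metric.ball (0 : ℂ) 1, ∀ b ∈ Metric.ball (0 : ℂ) 1, ‖η * a * b‖ < 1 :=
    fun a ha b hb => norm_mul_mul_lt_one hη (mem_ball_zero_iff.mp ha) (mem_ball_zero_iff.mp hb)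
  have hA0 : ‖η * w * φ 0‖ < 1 := hnorm w hw (φ 0) (hφmap 0 (Metric.mem_ball_self one_pos))
  have hμ0 : μ ≠ 0 := norm_ne_zero_iff.mp (by simp [hμ])
  have hη0 : η ≠ 0 := norm_ne_zero_iff.mp (by simp [hη])
  have hp0 : p ≠ 0 := hp ▸ Complex.prod_range_ofReal_add_two_add_ne_zero hα n
  have hψw : ψ w ≠ 0 := by rw [hψdef w hw]; exact mul_ne_zero (pow_ne_zero m hw0) hgw
  refine eq_of_eventually_pow_mul_eq
    (u := fun z => μ * p * g z * (η * w) ^ n * (1 - η * φ w * z) ^ s)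
    (v := fun z => μ * p * ψ w * η ^ n * (1 - η * w * φ z) ^ s) ?_ ?_ ?_ ?_ ?_
  · fun_prop (disch := simp)
  · fun_prop (disch := exact Complex.one_sub_mem_slitPlane hA0)
  · simp [hμ0, hp0, hg0, hη0, hw0]
  · exact mul_ne_zero (by simp [hμ0, hp0, hψw, hη0]) (Complex.one_sub_cpow_ne_zero hA0 s)
  · filter_upwards [hball] with z hz
    have h := heq z hz w hw
    rw [div_eq_div_iff (Complex.one_sub_cpow_ne_zero (hnorm w hw (φ z) (hφmap z hz)) s)
      (Complex.one_sub_cpow_ne_zero (hnorm (φ w) (hφmap w hw) z hz) s), hψdef z hz] at h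
    linear_combination h

/-- If `ψ(z) = z^m g(z)` with `g(0) ≠ 0` and the reproducing-kernel identity for
complex symmetry of `D_{n,ψ,φ}` with conjugation `C_{μ,η}` holds on `A²_α`,
then `m = n`. -/
theorem stmt3 (α : ℝ) (hα : -1 < α) (n : ℕ) (hn : 1 ≤ n) (μ η : ℂ)
    (hμ : ‖μ‖ = 1) (hη : ‖η‖ = 1)
    (φ g : ℂ → ℂ)
    (hφ : DifferentiableOn ℂ φ (Metric.ball (0 : ℂ) 1))
    (hφmap : ∀ z ∈ Metric.ball (0 : ℂ) 1, φ z ∈ Metric.ball (0 : ℂ) 1)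
    (hg : DifferentiableOn ℂ g (Metric.ball (0 : ℂ) 1))
    (hg0 : g 0 ≠ 0)
    (m : ℕ) (hm : 1 ≤ m)
    (ψ : ℂ → ℂ) (hψdef : ∀ z ∈ Metric.ball (0 : ℂ) 1, ψ z = z ^ m * g z)
    (p : ℂ) (hp : p = ∏ j ∈ Finset.range n, ((α : ℂ) + 2 + j))
    (heq : ∀ z ∈ Metric.ball (0 : ℂ) 1, ∀ w ∈ Metric.ball (0 : ℂ) 1,
      μ * p * ψ z * (η * w) ^ n / (1 - η * w * φ z) ^ ((n : ℂ) + α + 2)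
        = μ * p * ψ w * (η * z) ^ n / (1 - η * φ w * z) ^ ((n : ℂ) + α + 2)) :
    m = n :=
  stmt3_general α hα n μ η hμ hη φ g hφ hφmap hg hg0 m ψ hψdef p hp heq
end

section
/- Let α > -1, let n ≥ 1 be an integer, let η ∈ ℂ with |η| = 1, let φ : 𝔻 → 𝔻 be analytic, and set b = φ(0). If for all z, w ∈ 𝔻, (1 - ηbz)^{n+α+2}·(1 - ηw·φ(z))^{n+α+2} = (1 - ηbw)^{n+α+2}·(1 - η·φ(w)·z)^{n+α+2}, then for all z ∈ 𝔻, φ(z) = b + φ'(0)·z / (1 - ηbz). -/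
/-! Fix `z` and differentiate both sides of the identity in `w` at `w = 0`, using the chain rule
for `w ↦ (1 - f w) ^ s` (all bases stay in the slit plane). Writing `A = 1 - η b z`, this gives
`-s η φ(z) A^s = -s η b A^s - s η φ'(0) z A^(s-1)`, and dividing by `-s η A^(s-1)` leaves
`φ(z) A = b A + φ'(0) z`. -/

open Complex

theorem Complex.one_sub_mem_slitPlane_of_norm_lt_one {u : ℂ} (hu : ‖u‖ < 1) :
    1 - u ∈ slitPlane := by
  simpa [sub_eq_add_neg] using mem_slitPlane_of_norm_lt_one (z := -u) (by simpa using hu)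

theorem HasDerivAt.one_sub_cpow_const {f : ℂ → ℂ} {f' x : ℂ} (s : ℂ) (hf : HasDerivAt f f' x)
    (h : 1 - f x ∈ slitPlane) :
    HasDerivAt (fun w => (1 - f w) ^ s) (-(s * (1 - f x) ^ (s - 1) * f')) x := by
  simpa using (hf.const_sub 1).cpow_const (c := s) h

theorem mul_one_sub_eq_of_cpow_identity {ψ : ℂ → ℂ} {d η s z c : ℂ} (hψ : HasDerivAt ψ d 0)
    (hs : s ≠ 0) (hη : η ≠ 0) (hA : 1 - η * ψ 0 * z ∈ slitPlane)
    (heq : (fun w => (1 - η * ψ 0 * z) ^ s * (1 - η * w * c) ^ s)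
      =ᶠ[nhds 0] fun w => (1 - η * ψ 0 * w) ^ s * (1 - η * ψ w * z) ^ s) :
    c * (1 - η * ψ 0 * z) = ψ 0 * (1 - η * ψ 0 * z) + d * z := by
  set A := 1 - η * ψ 0 * z
  have hlhs : HasDerivAt (fun w => A ^ s * (1 - η * w * c) ^ s)
      (A ^ s * -(s * η * c)) 0 := by
    have := ((hasDerivAt_id' (x := (0 : ℂ))).const_mul η).mul_const c |>.one_sub_cpow_const s
      (by simp)
    simpa [mul_assoc] using this.const_mul (A ^ s)
  have hrhs : HasDerivAt (fun w => (1 - η * ψ 0 * w) ^ s * (1 - η * ψ w * z) ^ s)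
      (-(s * (η * ψ 0)) * A ^ s - s * A ^ (s - 1) * (η * d * z)) 0 := by
    have hb := ((hasDerivAt_id' (x := (0 : ℂ))).const_mul (η * ψ 0)).one_sub_cpow_const s
      (by simp)
    have hψz := ((hψ.const_mul η).mul_const z).one_sub_cpow_const s hA
    exact (hb.mul hψz).congr_deriv (by simp only [mul_zero, sub_zero, one_cpow]; ring)
  have hderiv := hlhs.unique (hrhs.congr_of_eventuallyEq heq)
  have hA0 : A ≠ 0 := slitPlane_ne_zero hA
  rw [← sub_add_cancel s 1, cpow_add _ _ hA0, cpow_one, add_sub_cancel_right] at hderiv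
  have hfac : -(s * η * A ^ (s - 1)) ≠ 0 := by
    simp [hs, hη, cpow_def_of_ne_zero hA0, exp_ne_zero]
  exact mul_left_cancel₀ hfac (by linear_combination hderiv)

theorem stmt5_general (α : ℝ) (hα : -1 < α) (n : ℕ) (η : ℂ)
    (hη : ‖η‖ = 1)
    (φ : ℂ → ℂ)
    (hφ : DifferentiableOn ℂ φ (Metric.ball (0 : ℂ) 1))
    (hφmap : ∀ z ∈ Metric.ball (0 : ℂ) 1, φ z ∈ Metric.ball (0 : ℂ) 1)
    (heq : ∀ z ∈ Metric.ball (0 : ℂ) 1, ∀ w ∈ Metric.ball (0 : ℂ) 1,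
      (1 - η * φ 0 * z) ^ ((n : ℂ) + α + 2) * (1 - η * w * φ z) ^ ((n : ℂ) + α + 2)
        = (1 - η * φ 0 * w) ^ ((n : ℂ) + α + 2) *
            (1 - η * φ w * z) ^ ((n : ℂ) + α + 2)) :
    ∀ z ∈ Metric.ball (0 : ℂ) 1,
      φ z = φ 0 + deriv φ 0 * z / (1 - η * φ 0 * z) := by
  intro z hz
  have hball : Metric.ball (0 : ℂ) 1 ∈ nhds 0 := Metric.ball_mem_nhds 0 one_pos
  have hs : (n : ℂ) + α + 2 ≠ 0 := fun h => by
    have := congrArg re h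
    simp only [add_re, natCast_re, ofReal_re, re_ofNat, zero_re] at this
    linarith [n.cast_nonneg (α := ℝ)]
  have hη0 : η ≠ 0 := norm_ne_zero_iff.mp (by simp [hη])
  have hA : 1 - η * φ 0 * z ∈ slitPlane := by
    refine one_sub_mem_slitPlane_of_norm_lt_one ?_
    have hb := mem_ball_zero_iff.mp (hφmap 0 (Metric.mem_ball_self one_pos))
    rw [norm_mul, norm_mul, hη, one_mul]
    exact mul_lt_one_of_nonneg_of_lt_one_left (norm_nonneg _) hb (mem_ball_zero_iff.mp hz).le
  have key := mul_one_sub_eq_of_cpow_identity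
    ((hφ.differentiableAt hball).hasDerivAt) hs hη0 hA
    (Filter.eventually_of_mem hball (heq z hz))
  rw [add_div' _ _ _ (slitPlane_ne_zero hA), eq_div_iff (slitPlane_ne_zero hA)]
  exact key

/-- If `(1-ηbz)^{n+α+2}(1-ηw·φ(z))^{n+α+2} = (1-ηbw)^{n+α+2}(1-η·φ(w)·z)^{n+α+2}`
for all `z, w` in the unit disk, where `b = φ(0)`, then
`φ(z) = b + φ'(0)·z/(1-ηbz)`. -/
theorem stmt5 (α : ℝ) (hα : -1 < α) (n : ℕ) (hn : 1 ≤ n) (η : ℂ)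
    (hη : ‖η‖ = 1)
    (φ : ℂ → ℂ)
    (hφ : DifferentiableOn ℂ φ (Metric.ball (0 : ℂ) 1))
    (hφmap : ∀ z ∈ Metric.ball (0 : ℂ) 1, φ z ∈ Metric.ball (0 : ℂ) 1)
    (heq : ∀ z ∈ Metric.ball (0 : ℂ) 1, ∀ w ∈ Metric.ball (0 : ℂ) 1,
      (1 - η * φ 0 * z) ^ ((n : ℂ) + α + 2) * (1 - η * w * φ z) ^ ((n : ℂ) + α + 2)
        = (1 - η * φ 0 * w) ^ ((n : ℂ) + α + 2) *
            (1 - η * φ w * z) ^ ((n : ℂ) + α + 2)) :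
    ∀ z ∈ Metric.ball (0 : ℂ) 1,
      φ z = φ 0 + deriv φ 0 * z / (1 - η * φ 0 * z) :=
  stmt5_general α hα n η hη φ hφ hφmap heq
end

section
/- Let η ∈ ℂ with |η| = 1, and let φ be an automorphism of 𝔻, i.e. there exist ξ ∈ ℂ with |ξ| = 1 and a₀ ∈ 𝔻 such that φ(z) = ξ·(a₀ - z)/(1 - conj(a₀)·z) for all z ∈ 𝔻. Suppose in addition there exist b ∈ 𝔻 and c ∈ ℂ such that φ(z) = b + cz/(1 - ηbz) for all z ∈ 𝔻. Then either (a) there exists ξ' ∈ ℂ with |ξ'| = 1 such that φ(z) = -ξ'·z for all z ∈ 𝔻, or (b) a₀ ≠ 0 and φ(z) = (conj(a₀)/(η·a₀)) · (a₀ - z)/(1 - conj(a₀)·z) for all z ∈ 𝔻. -/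
/-!
Clearing denominators in `ξ (a₀ - z) / (1 - conj a₀ z) = b + c z / (1 - η b z)` gives a
polynomial identity of degree two on the disk, so its three coefficients vanish. The constant
term gives `b = ξ a₀`; substituting this and the linear coefficient into the quadratic one
leaves `ξ (1 - |a₀|²) (conj a₀ - ξ η a₀) = 0`, i.e. `ξ = conj a₀ / (η a₀)` whenever `a₀ ≠ 0`.
-/

open ComplexConjugate

lemma one_sub_mul_ne_zero_of_norm_le_one_of_norm_lt_one {R : Type*} [SeminormedRing R]
    [NormOneClass R] {w z : R} (hw : ‖w‖ ≤ 1) (hz : ‖z‖ < 1) : 1 - w * z ≠ 0 := by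
  refine sub_ne_zero.2 fun h => ?_
  have : ‖w * z‖ < 1 :=
    (norm_mul_le w z).trans_lt (mul_lt_one_of_nonneg_of_lt_one_right hw (norm_nonneg z) hz)
  rw [← h, norm_one] at this
  exact lt_irrefl 1 this

lemma quadratic_coeffs_eq_zero_of_eq_zero_on_ball {p₀ p₁ p₂ : ℂ}
    (h : ∀ z ∈ Metric.ball (0 : ℂ) 1, p₀ + p₁ * z + p₂ * z ^ 2 = 0) :
    p₀ = 0 ∧ p₁ = 0 ∧ p₂ = 0 := by
  have h₀ := h 0 (by simp)
  have hhalf := h (1 / 2) (by norm_num)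
  have hneghalf := h (-(1 / 2)) (by norm_num)
  refine ⟨?_, ?_, ?_⟩
  · linear_combination h₀
  · linear_combination hhalf - hneghalf
  · linear_combination 2 * hhalf + 2 * hneghalf - 4 * h₀

lemma conj_eq_mul_of_eq_on_ball {η ξ a₀ b c : ℂ} (hη : ‖η‖ = 1) (hξ : ξ ≠ 0)
    (ha₀ : ‖a₀‖ < 1) (hb : ‖b‖ < 1)
    (h : ∀ z ∈ Metric.ball (0 : ℂ) 1,
      ξ * (a₀ - z) / (1 - conj a₀ * z) = b + c * z / (1 - η * b * z)) :
    conj a₀ = ξ * η * a₀ := by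
  have hcross : ∀ z ∈ Metric.ball (0 : ℂ) 1,
      (ξ * a₀ - b) + (η * b ^ 2 + b * conj a₀ - c - ξ - ξ * η * a₀ * b) * z
        + (ξ * η * b + conj a₀ * c - conj a₀ * η * b ^ 2) * z ^ 2 = 0 := by
    intro z hz
    have hz₁ : ‖z‖ < 1 := mem_ball_zero_iff.1 hz
    have hden₁ : 1 - conj a₀ * z ≠ 0 :=
      one_sub_mul_ne_zero_of_norm_le_one_of_norm_lt_one (by simpa using ha₀.le) hz₁
    have hden₂ : 1 - η * b * z ≠ 0 :=
      one_sub_mul_ne_zero_of_norm_le_one_of_norm_lt_one (by simpa [hη] using hb.le) hz₁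
    have e₁ : ξ * (a₀ - z) / (1 - conj a₀ * z) * (1 - conj a₀ * z) = ξ * (a₀ - z) :=
      div_mul_cancel₀ _ hden₁
    have e₂ : c * z / (1 - η * b * z) * (1 - η * b * z) = c * z := div_mul_cancel₀ _ hden₂
    linear_combination (1 - conj a₀ * z) * (1 - η * b * z) * h z hz
      - (1 - η * b * z) * e₁ + (1 - conj a₀ * z) * e₂
  obtain ⟨h₀, h₁, h₂⟩ := quadratic_coeffs_eq_zero_of_eq_zero_on_ball hcross
  have hprod : ξ * (1 - a₀ * conj a₀) * (conj a₀ - ξ * η * a₀) = 0 := by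
    linear_combination (-(conj a₀) ^ 2 + ξ * η * a₀ * conj a₀ - ξ * η) * h₀
      - conj a₀ * h₁ - h₂
  have hnorm : 1 - a₀ * conj a₀ ≠ 0 :=
    one_sub_mul_ne_zero_of_norm_le_one_of_norm_lt_one ha₀.le (by simpa using ha₀)
  simpa [hξ, hnorm, sub_eq_zero] using hprod

/-- Theorem 2.2: if `φ` is a disk automorphism `φ(z) = ξ(a₀-z)/(1-conj(a₀)z)` which
also has the form `φ(z) = b + cz/(1-ηbz)` forced by `C_{μ,η}`-symmetry, then
either `φ(z) = -ξ'z` for some unimodular `ξ'`, or `a₀ ≠ 0` and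
`φ(z) = (conj(a₀)/(η a₀))·(a₀-z)/(1-conj(a₀)z)`. -/
theorem stmt6 (η ξ a₀ : ℂ) (hη : ‖η‖ = 1) (hξ : ‖ξ‖ = 1)
    (ha₀ : a₀ ∈ Metric.ball (0 : ℂ) 1)
    (φ : ℂ → ℂ)
    (hφauto : ∀ z ∈ Metric.ball (0 : ℂ) 1,
      φ z = ξ * (a₀ - z) / (1 - conj a₀ * z))
    (b c : ℂ) (hb : b ∈ Metric.ball (0 : ℂ) 1)
    (hφform : ∀ z ∈ Metric.ball (0 : ℂ) 1,
      φ z = b + c * z / (1 - η * b * z)) :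
    (∃ ξ' : ℂ, ‖ξ'‖ = 1 ∧
        ∀ z ∈ Metric.ball (0 : ℂ) 1, φ z = -ξ' * z) ∨
    (a₀ ≠ 0 ∧ ∀ z ∈ Metric.ball (0 : ℂ) 1,
        φ z = (conj a₀ / (η * a₀)) * ((a₀ - z) / (1 - conj a₀ * z))) := by
  rcases eq_or_ne a₀ 0 with rfl | ha
  · exact Or.inl ⟨ξ, hξ, fun z hz => by simp [hφauto z hz]⟩
  refine Or.inr ⟨ha, fun z hz => ?_⟩
  have hconj : conj a₀ = ξ * η * a₀ :=
    conj_eq_mul_of_eq_on_ball hη (norm_ne_zero_iff.1 (by simp [hξ])) (mem_ball_zero_iff.1 ha₀)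
      (mem_ball_zero_iff.1 hb) fun z hz => (hφauto z hz).symm.trans (hφform z hz)
  have hη₀ : η ≠ 0 := norm_ne_zero_iff.1 (by simp [hη])
  rw [hφauto z hz, mul_div_assoc]
  congr 1
  rw [hconj, mul_assoc, mul_div_cancel_right₀ _ (mul_ne_zero hη₀ ha)]
end

section
/- Let α > -1, let n ≥ 1 be an integer, let φ : 𝔻 → 𝔻 be analytic, and let ψ be analytic on 𝔻 and not identically zero. Suppose that for all z, w ∈ 𝔻, p·z^n·conj(ψ(w)) / (1 - z·conj(φ(w)))^{n+α+2} = p·conj(w)^n·ψ(z) / (1 - conj(w)·φ(z))^{n+α+2}. Then, with b = φ(0) ∈ 𝔻, there exist real numbers a, c ∈ ℝ such that for all z ∈ 𝔻, ψ(z) = a·z^n / (1 - conj(b)·z)^{n+α+2} and φ(z) = b + cz/(1 - conj(b)·z). -/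
/-!
With `s = n + α + 2` and `χ z = ψ z / z ^ n`, clearing denominators turns the hypothesis into
`conj (χ w) * (1 - conj w * φ z) ^ s = χ z * (1 - z * conj (φ w)) ^ s` for `z, w ≠ 0`.
Letting `w → 0` shows that `χ z * (1 - z * conj (φ 0)) ^ s` is a constant `L`; since `χ w → L`
and `conj (χ w) → L`, the constant is real. Substituting back leaves an equality of `s`-th powers
of two products of factors in the right half-plane. For fixed `z`, the difference of the
corresponding sums of logarithms is continuous in `w`, takes values in `2πiℤ` and vanishes at
`w = 0`, so it vanishes on the whole disk and the products agree. This sesquilinear identity,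
evaluated at `w = 1/2`, gives the Möbius form of `φ` with a real coefficient.
-/

open ComplexConjugate

open Complex Filter Topology Set

local notation "𝔻" => Metric.ball (0 : ℂ) 1

theorem one_sub_mul_mem_slitPlane_s9 {z u : ℂ} (hz : z ∈ 𝔻) (hu : u ∈ 𝔻) :
    1 - z * u ∈ slitPlane := by
  rw [mem_ball_zero_iff] at hz hu
  rw [sub_eq_add_neg]
  apply mem_slitPlane_of_norm_lt_one
  rw [norm_neg, norm_mul]
  exact mul_lt_one_of_nonneg_of_lt_one_left (norm_nonneg _) hz hu.le

theorem IsPreconnected.eqOn_of_exp_eq {X : Type*} [TopologicalSpace X] {S : Set X}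
    (hS : IsPreconnected S) {F G : X → ℂ} (hF : ContinuousOn F S) (hG : ContinuousOn G S)
    (hexp : ∀ x ∈ S, exp (F x) = exp (G x)) {x₀ : X} (hx₀ : x₀ ∈ S) (h₀ : F x₀ = G x₀) :
    EqOn F G S := by
  have hmaps : MapsTo (F - G) S (AddSubgroup.zmultiples (2 * Real.pi * I)) := fun x hx => by
    obtain ⟨k, hk⟩ := exp_eq_exp_iff_exists_int.1 (hexp x hx)
    exact ⟨k, by simp [hk, zsmul_eq_mul]⟩
  intro x hx
  have := hS.constant_of_mapsTo
    (isDiscrete_iff_discreteTopology.2 (NormedSpace.discreteTopology_zmultiples _))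
    (hF.sub hG) hmaps hx hx₀
  simpa [h₀, sub_eq_zero] using this

-- The Bergman kernel identity of the theorem, with `p` cancelled and denominators cleared.
def KernelSymmetric (φ ψ : ℂ → ℂ) (n : ℕ) (s : ℂ) : Prop :=
  ∀ z ∈ 𝔻, ∀ w ∈ 𝔻,
    z ^ n * conj (ψ w) * (1 - conj w * φ z) ^ s = conj w ^ n * ψ z * (1 - z * conj (φ w)) ^ s

section KernelSymmetric

variable {φ ψ : ℂ → ℂ} {n : ℕ} {s : ℂ}

theorem kernelSymmetric_of_div_eq_div (hφ : MapsTo φ 𝔻 𝔻) {p : ℂ} (hp : p ≠ 0)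
    (heq : ∀ z ∈ 𝔻, ∀ w ∈ 𝔻, p * z ^ n * conj (ψ w) / (1 - z * conj (φ w)) ^ s
      = p * conj w ^ n * ψ z / (1 - conj w * φ z) ^ s) :
    KernelSymmetric φ ψ n s := by
  intro z hz w hw
  have hzw := slitPlane_ne_zero
    (one_sub_mul_mem_slitPlane_s9 (u := conj (φ w)) hz (by simpa using hφ hw))
  have hwz := slitPlane_ne_zero
    (one_sub_mul_mem_slitPlane_s9 (z := conj w) (by simpa using hw) (hφ hz))
  have h := heq z hz w hw
  rw [div_eq_div_iff (cpow_ne_zero_iff.2 (.inl hzw)) (cpow_ne_zero_iff.2 (.inl hwz))] at h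
  apply mul_left_cancel₀ hp
  linear_combination h

theorem KernelSymmetric.apply_zero (h : KernelSymmetric φ ψ n s) (hn : n ≠ 0) : ψ 0 = 0 := by
  have := h 0 (Metric.mem_ball_self one_pos) (1 / 2) (by rw [mem_ball_zero_iff]; norm_num)
  simpa [zero_pow hn] using this

theorem KernelSymmetric.tendsto_conj_div_pow (h : KernelSymmetric φ ψ n s) (hφ : MapsTo φ 𝔻 𝔻)
    (hφ0 : ContinuousAt φ 0) {z : ℂ} (hz : z ∈ 𝔻) (hz0 : z ≠ 0) :
    Tendsto (fun w => conj (ψ w / w ^ n)) (𝓝[≠] 0)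
      (𝓝 (ψ z / z ^ n * (1 - z * conj (φ 0)) ^ s)) := by
  have hcont : ContinuousAt
      (fun w => ψ z / z ^ n * (1 - z * conj (φ w)) ^ s / (1 - conj w * φ z) ^ s) 0 := by
    refine ContinuousAt.div (continuousAt_const.mul ?_) ?_ (by simp)
    · exact (continuousAt_const.sub (continuousAt_const.mul
        (continuous_conj.continuousAt.comp hφ0))).cpow continuousAt_const
        (one_sub_mul_mem_slitPlane_s9 (u := conj (φ 0)) hz
          (by simpa using hφ (Metric.mem_ball_self one_pos)))
    · exact (continuousAt_const.sub ((continuous_conj.continuousAt).mul continuousAt_const)).cpow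
        continuousAt_const (by simp)
  refine ((hcont.tendsto.mono_left nhdsWithin_le_nhds).congr' ?_).mono_right (by simp)
  filter_upwards [self_mem_nhdsWithin, nhdsWithin_le_nhds (Metric.ball_mem_nhds 0 one_pos)]
    with w hw0 hw
  have hwz := slitPlane_ne_zero
    (one_sub_mul_mem_slitPlane_s9 (z := conj w) (by simpa using hw) (hφ hz))
  have hzn : z ^ n ≠ 0 := pow_ne_zero n hz0
  have hwn : conj w ^ n ≠ 0 := pow_ne_zero n (by simpa using hw0)
  have hwz' := (cpow_ne_zero_iff (y := s)).2 (.inl hwz)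
  rw [map_div₀, map_pow]
  field_simp
  linear_combination -h z hz w hw

theorem KernelSymmetric.exists_eq_mul_div_cpow (h : KernelSymmetric φ ψ n s) (hn : n ≠ 0)
    (hφ : MapsTo φ 𝔻 𝔻) (hφ0 : ContinuousAt φ 0) :
    ∃ L : ℂ, Tendsto (fun w => conj (ψ w / w ^ n)) (𝓝[≠] 0) (𝓝 L) ∧
      ∀ z ∈ 𝔻, ψ z = L * z ^ n / (1 - conj (φ 0) * z) ^ s := by
  have hhalf : (1 / 2 : ℂ) ∈ 𝔻 := by rw [mem_ball_zero_iff]; norm_num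
  have hL := h.tendsto_conj_div_pow hφ hφ0 hhalf (by norm_num)
  refine ⟨_, hL, fun z hz => ?_⟩
  rcases eq_or_ne z 0 with rfl | hz0
  · simp [h.apply_zero hn, zero_pow hn]
  rw [← tendsto_nhds_unique (h.tendsto_conj_div_pow hφ hφ0 hz hz0) hL, mul_comm (conj (φ 0)) z]
  have hb := slitPlane_ne_zero (one_sub_mul_mem_slitPlane_s9 (u := conj (φ 0)) hz
    (by simpa using hφ (Metric.mem_ball_self one_pos)))
  have := (cpow_ne_zero_iff (y := s)).2 (.inl hb)
  have := pow_ne_zero n hz0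
  field_simp

theorem KernelSymmetric.exists_real_eq_mul_div_cpow (h : KernelSymmetric φ ψ n s) (hn : n ≠ 0)
    (hφ : MapsTo φ 𝔻 𝔻) (hφ0 : ContinuousAt φ 0) :
    ∃ a : ℝ, ∀ z ∈ 𝔻, ψ z = a * z ^ n / (1 - conj (φ 0) * z) ^ s := by
  obtain ⟨L, hL, hψ⟩ := h.exists_eq_mul_div_cpow hn hφ hφ0
  have hlim : Tendsto (fun w => ψ w / w ^ n) (𝓝[≠] 0) (𝓝 L) := by
    have hcont : ContinuousAt (fun w => L / (1 - conj (φ 0) * w) ^ s) 0 :=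
      continuousAt_const.div ((continuousAt_const.sub
        (continuousAt_const.mul continuousAt_id)).cpow continuousAt_const (by simp)) (by simp)
    refine ((hcont.tendsto.mono_left nhdsWithin_le_nhds).congr' ?_).mono_right (by simp)
    filter_upwards [self_mem_nhdsWithin, nhdsWithin_le_nhds (Metric.ball_mem_nhds 0 one_pos)]
      with w hw0 hw
    have := pow_ne_zero n (show w ≠ 0 from hw0)
    rw [hψ w hw]
    field_simp
  have hlim_conj : Tendsto (fun w => ψ w / w ^ n) (𝓝[≠] 0) (𝓝 (conj L)) := by
    simpa [Function.comp_def] using (continuous_conj.tendsto L).comp hL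
  refine ⟨L.re, ?_⟩
  rwa [conj_eq_iff_re.1 (tendsto_nhds_unique hlim_conj hlim)]

theorem KernelSymmetric.cpow_mul_cpow_eq (h : KernelSymmetric φ ψ n s) (hφ : MapsTo φ 𝔻 𝔻)
    (hs : conj s = s) {a : ℝ} (ha : a ≠ 0)
    (hψ : ∀ z ∈ 𝔻, ψ z = a * z ^ n / (1 - conj (φ 0) * z) ^ s) {z w : ℂ} (hz : z ∈ 𝔻)
    (hw : w ∈ 𝔻) :
    (1 - conj w * φ z) ^ s * (1 - z * conj (φ 0)) ^ s
      = (1 - z * conj (φ w)) ^ s * (1 - conj w * φ 0) ^ s := by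
  rcases eq_or_ne z 0 with rfl | hz0
  · simp [mul_comm]
  rcases eq_or_ne w 0 with rfl | hw0
  · simp [mul_comm]
  have hb : conj (φ 0) ∈ 𝔻 := by simpa using hφ (Metric.mem_ball_self one_pos)
  have hbz := one_sub_mul_mem_slitPlane_s9 hb hz
  have hbw := one_sub_mul_mem_slitPlane_s9 hb hw
  have hconj := conj_cpow _ s (slitPlane_arg_ne_pi hbw)
  rw [hs] at hconj
  simp only [map_sub, map_one, map_mul, conj_conj] at hconj
  have key := h z hz w hw
  rw [hψ z hz, hψ w hw, map_div₀, map_mul, map_pow, conj_ofReal, ← hconj] at key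
  have := (cpow_ne_zero_iff (y := s)).2 (.inl (slitPlane_ne_zero hbz))
  have hbw' : (1 - φ 0 * conj w) ^ s ≠ 0 := by
    rw [hconj, map_ne_zero]
    exact (cpow_ne_zero_iff (y := s)).2 (.inl (slitPlane_ne_zero hbw))
  field_simp at key
  rw [mul_comm z (conj (φ 0)), mul_comm (conj w) (φ 0)]
  apply mul_left_cancel₀
    (mul_ne_zero (ofReal_ne_zero.2 ha) (pow_ne_zero n ((map_ne_zero conj).2 hw0)))
  linear_combination key

end KernelSymmetric

theorem mul_eq_mul_of_cpow_mul_cpow_eq {φ : ℂ → ℂ} (hφ : MapsTo φ 𝔻 𝔻)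
    (hφc : ContinuousOn φ 𝔻) {s : ℂ} (hs : s ≠ 0) {z : ℂ} (hz : z ∈ 𝔻)
    (h : ∀ w ∈ 𝔻, (1 - conj w * φ z) ^ s * (1 - z * conj (φ 0)) ^ s
      = (1 - z * conj (φ w)) ^ s * (1 - conj w * φ 0) ^ s) {w : ℂ} (hw : w ∈ 𝔻) :
    (1 - conj w * φ z) * (1 - z * conj (φ 0)) = (1 - z * conj (φ w)) * (1 - conj w * φ 0) := by
  have h0 : (0 : ℂ) ∈ 𝔻 := Metric.mem_ball_self one_pos
  have hconjφ : MapsTo (fun w => conj (φ w)) 𝔻 𝔻 := fun w hw => by simpa using hφ hw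
  have hconj : MapsTo conj 𝔻 𝔻 := fun w hw => by simpa using hw
  have hmem₁ (w) (hw : w ∈ 𝔻) := one_sub_mul_mem_slitPlane_s9 (hconj hw) (hφ hz)
  have hmem₂ := one_sub_mul_mem_slitPlane_s9 hz (hconjφ h0)
  have hmem₃ (w) (hw : w ∈ 𝔻) := one_sub_mul_mem_slitPlane_s9 hz (hconjφ hw)
  have hmem₄ (w) (hw : w ∈ 𝔻) := one_sub_mul_mem_slitPlane_s9 (hconj hw) (hφ h0)
  have hlogs : EqOn (fun w => (log (1 - conj w * φ z) + log (1 - z * conj (φ 0))) * s)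
      (fun w => (log (1 - z * conj (φ w)) + log (1 - conj w * φ 0)) * s) 𝔻 := by
    refine (convex_ball (0 : ℂ) 1).isPreconnected.eqOn_of_exp_eq ?_ ?_ (fun w hw => ?_) h0
      (by simp [add_comm])
    · exact ((continuousOn_const.sub (continuous_conj.continuousOn.mul continuousOn_const)).clog
        hmem₁ |>.add continuousOn_const).mul continuousOn_const
    · exact ((continuousOn_const.sub (continuousOn_const.mul
        (continuous_conj.comp_continuousOn hφc))).clog hmem₃ |>.add
        ((continuousOn_const.sub (continuous_conj.continuousOn.mul continuousOn_const)).clog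
        hmem₄)).mul continuousOn_const
    · simp only [add_mul, exp_add, ← cpow_def_of_ne_zero (slitPlane_ne_zero (hmem₁ w hw)),
        ← cpow_def_of_ne_zero (slitPlane_ne_zero hmem₂),
        ← cpow_def_of_ne_zero (slitPlane_ne_zero (hmem₃ w hw)),
        ← cpow_def_of_ne_zero (slitPlane_ne_zero (hmem₄ w hw))]
      exact h w hw
  have := congrArg exp (mul_right_cancel₀ hs (hlogs hw))
  rwa [exp_add, exp_add, exp_log (slitPlane_ne_zero (hmem₁ w hw)),
    exp_log (slitPlane_ne_zero hmem₂), exp_log (slitPlane_ne_zero (hmem₃ w hw)),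
    exp_log (slitPlane_ne_zero (hmem₄ w hw))] at this

theorem exists_real_eq_add_div_of_mul_eq {φ : ℂ → ℂ} (hb : φ 0 ∈ 𝔻)
    (h : ∀ z ∈ 𝔻, ∀ w ∈ 𝔻, (1 - conj w * φ z) * (1 - z * conj (φ 0))
      = (1 - z * conj (φ w)) * (1 - conj w * φ 0)) :
    ∃ c : ℝ, ∀ z ∈ 𝔻, φ z = φ 0 + c * z / (1 - conj (φ 0) * z) := by
  have hhalf : (1 / 2 : ℂ) ∈ 𝔻 := by rw [mem_ball_zero_iff]; norm_num
  have hconj_half : conj (1 / 2 : ℂ) = 1 / 2 := by rw [map_div₀, map_one, map_ofNat]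
  set c : ℂ := 2 * (1 - 1 / 2 * φ 0) * (conj (φ (1 / 2)) - conj (φ 0))
  have hc : conj c = c := by
    have e := h (1 / 2) hhalf (1 / 2) hhalf
    rw [hconj_half] at e
    simp only [c, map_mul, map_sub, map_one, map_ofNat, hconj_half, conj_conj]
    linear_combination (-4) * e
  refine ⟨c.re, fun z hz => ?_⟩
  -- `e` says exactly that `(φ z - φ 0) * (1 - conj (φ 0) * z) = c * z`.
  have e := h z hz (1 / 2) hhalf
  rw [hconj_half] at e
  have hden := slitPlane_ne_zero
    (one_sub_mul_mem_slitPlane_s9 (u := conj (φ 0)) hz (by simpa using hb))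
  rw [conj_eq_iff_re.1 hc, mul_comm (conj (φ 0)) z]
  field_simp
  linear_combination (-2) * e

theorem stmt9_general (α : ℝ) (hα : -1 < α) (n : ℕ) (hn : 1 ≤ n)
    (φ ψ : ℂ → ℂ)
    (hφ : DifferentiableOn ℂ φ (Metric.ball (0 : ℂ) 1))
    (hφmap : ∀ z ∈ Metric.ball (0 : ℂ) 1, φ z ∈ Metric.ball (0 : ℂ) 1)
    (hψne : ∃ z ∈ Metric.ball (0 : ℂ) 1, ψ z ≠ 0)
    (p : ℂ) (hp : p = ∏ j ∈ Finset.range n, ((α : ℂ) + 2 + j))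
    (heq : ∀ z ∈ Metric.ball (0 : ℂ) 1, ∀ w ∈ Metric.ball (0 : ℂ) 1,
      p * z ^ n * conj (ψ w) / (1 - z * conj (φ w)) ^ ((n : ℂ) + α + 2)
        = p * (conj w) ^ n * ψ z / (1 - conj w * φ z) ^ ((n : ℂ) + α + 2)) :
    ∃ a c : ℝ, ∀ z ∈ Metric.ball (0 : ℂ) 1,
      ψ z = (a : ℂ) * z ^ n / (1 - conj (φ 0) * z) ^ ((n : ℂ) + α + 2) ∧
      φ z = φ 0 + (c : ℂ) * z / (1 - conj (φ 0) * z) := by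
  have hs_re : 0 < ((n : ℂ) + α + 2).re := by
    simp only [add_re, natCast_re, ofReal_re, re_ofNat]; linarith
  have hs_conj : conj ((n : ℂ) + α + 2) = (n : ℂ) + α + 2 := by simp [map_ofNat]
  have hp0 : p ≠ 0 := hp ▸ Finset.prod_ne_zero_iff.2 fun j _ =>
    ne_zero_of_re_pos (by
      simp only [add_re, ofReal_re, re_ofNat, natCast_re]; linarith [j.cast_nonneg (α := ℝ)])
  have hsym := kernelSymmetric_of_div_eq_div hφmap hp0 heq
  obtain ⟨a, hψ⟩ := hsym.exists_real_eq_mul_div_cpow (by omega) hφmap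
    (hφ.continuousOn.continuousAt (Metric.ball_mem_nhds 0 one_pos))
  obtain ⟨w₀, hw₀, hψw₀⟩ := hψne
  have ha : a ≠ 0 := by
    rintro rfl
    simp [hψ w₀ hw₀] at hψw₀
  obtain ⟨c, hc⟩ := exists_real_eq_add_div_of_mul_eq (hφmap 0 (Metric.mem_ball_self one_pos))
    fun z hz w hw => mul_eq_mul_of_cpow_mul_cpow_eq hφmap hφ.continuousOn
      (ne_zero_of_re_pos hs_re) hz (fun _ hv => hsym.cpow_mul_cpow_eq hφmap hs_conj ha hψ hz hv) hw
  exact ⟨a, c, fun z hz => ⟨hψ z hz, hc z hz⟩⟩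

/-- Theorem 2.4 (forward direction): if the reproducing-kernel identity for
Hermitianness of `D_{n,ψ,φ}` holds on `A²_α`, then `ψ` and `φ` have the stated
forms with real parameters `a, c`. -/
theorem stmt9 (α : ℝ) (hα : -1 < α) (n : ℕ) (hn : 1 ≤ n)
    (φ ψ : ℂ → ℂ)
    (hφ : DifferentiableOn ℂ φ (Metric.ball (0 : ℂ) 1))
    (hφmap : ∀ z ∈ Metric.ball (0 : ℂ) 1, φ z ∈ Metric.ball (0 : ℂ) 1)
    (hψ : DifferentiableOn ℂ ψ (Metric.ball (0 : ℂ) 1))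
    (hψne : ∃ z ∈ Metric.ball (0 : ℂ) 1, ψ z ≠ 0)
    (p : ℂ) (hp : p = ∏ j ∈ Finset.range n, ((α : ℂ) + 2 + j))
    (heq : ∀ z ∈ Metric.ball (0 : ℂ) 1, ∀ w ∈ Metric.ball (0 : ℂ) 1,
      p * z ^ n * conj (ψ w) / (1 - z * conj (φ w)) ^ ((n : ℂ) + α + 2)
        = p * (conj w) ^ n * ψ z / (1 - conj w * φ z) ^ ((n : ℂ) + α + 2)) :
    ∃ a c : ℝ, ∀ z ∈ Metric.ball (0 : ℂ) 1,
      ψ z = (a : ℂ) * z ^ n / (1 - conj (φ 0) * z) ^ ((n : ℂ) + α + 2) ∧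
      φ z = φ 0 + (c : ℂ) * z / (1 - conj (φ 0) * z) :=
  stmt9_general α hα n hn φ ψ hφ hφmap hψne p hp heq
end

section
/- Let α > -1, let n ≥ 1 be an integer, let φ : 𝔻 → 𝔻 be analytic, and let g be analytic on 𝔻. If for all z, w ∈ 𝔻, conj(g(w)) / (1 - z·conj(φ(w)))^{n+α+2} = g(z) / (1 - conj(w)·φ(z))^{n+α+2}, then g(0) is real and for all z ∈ 𝔻, g(z) = conj(g(0)) / (1 - conj(φ(0))·z)^{n+α+2}. -/
open ComplexConjugate

/-- If `conj(g(w)) / (1 - z·conj(φ(w)))^{n+α+2} = g(z) / (1 - conj(w)·φ(z))^{n+α+2}`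
for all `z, w` in the unit disk, then `g(0)` is real and
`g(z) = conj(g(0)) / (1 - conj(φ(0))·z)^{n+α+2}`. -/
theorem stmt11 (α : ℝ) (hα : -1 < α) (n : ℕ) (hn : 1 ≤ n)
    (φ g : ℂ → ℂ)
    (hφ : DifferentiableOn ℂ φ (Metric.ball (0 : ℂ) 1))
    (hφmap : ∀ z ∈ Metric.ball (0 : ℂ) 1, φ z ∈ Metric.ball (0 : ℂ) 1)
    (hg : DifferentiableOn ℂ g (Metric.ball (0 : ℂ) 1))
    (heq : ∀ z ∈ Metric.ball (0 : ℂ) 1, ∀ w ∈ Metric.ball (0 : ℂ) 1,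
      conj (g w) / (1 - z * conj (φ w)) ^ ((n : ℂ) + α + 2)
        = g z / (1 - conj w * φ z) ^ ((n : ℂ) + α + 2)) :
    conj (g 0) = g 0 ∧
    ∀ z ∈ Metric.ball (0 : ℂ) 1,
      g z = conj (g 0) / (1 - conj (φ 0) * z) ^ ((n : ℂ) + α + 2) := by
  have h0 : (0 : ℂ) ∈ Metric.ball (0 : ℂ) 1 := by simp
  constructor
  · have := heq 0 h0 0 h0
    simpa using this
  · intro z hz
    have := heq z hz 0 h0
    simp only [map_zero, zero_mul, sub_zero, Complex.one_cpow, div_one] at this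
    rw [← this, mul_comm]
end

section
/- Let n ≥ 1 be an integer. There exists a sequence of positive real numbers (d_j)_{j≥1} with d₁ = 1, depending only on n, such that for every η ∈ ℂ with |η| = 1 and every b ∈ 𝔻 there is an r > 0 so that for all z ∈ ℂ with |z| < r, F₂(z) = ((n+1)²/(n+3))·F₁(z)·∑_{j=1}^∞ d_j·(ηb)^{j-1}·z^j, where F₁(z) = ∑_{k=n}^∞ (k!/(k-n)!)·δ_k·(ηb)^{k-n}·z^k and F₂(z) = ∑_{k=n+1}^∞ (k!/(k-n-1)!)·δ_k·(ηb)^{k-n-1}·z^k. -/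
open ComplexConjugate

/-- `δ_k = 2/((k+1)(k+2))`, the coefficients of the reproducing kernel of the
derivative Hardy space `S²₁(𝔻)`. -/
noncomputable def hardyDelta (k : ℕ) : ℂ := 2 / (((k : ℂ) + 1) * ((k : ℂ) + 2))

/-- `F₁(z) = ∑_{k=n}^∞ (k!/(k-n)!) δ_k u^{k-n} z^k` (index shifted by `n`),
with `u = ηb`. -/
noncomputable def F1 (n : ℕ) (u z : ℂ) : ℂ :=
  ∑' k : ℕ, (Nat.factorial (k + n) : ℂ) / (Nat.factorial k : ℂ) *
    hardyDelta (k + n) * u ^ k * z ^ (k + n)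

/-- `F₂(z) = ∑_{k=n+1}^∞ (k!/(k-n-1)!) δ_k u^{k-n-1} z^k` (index shifted by `n+1`),
with `u = ηb`. -/
noncomputable def F2 (n : ℕ) (u z : ℂ) : ℂ :=
  ∑' k : ℕ, (Nat.factorial (k + n + 1) : ℂ) / (Nat.factorial k : ℂ) *
    hardyDelta (k + n + 1) * u ^ k * z ^ (k + n + 1)

/-!
With `w = ηbz` the series are hypergeometric: `F₁ = zⁿ · n! δₙ · F(n+1, n+1; n+3; w)` and
`F₂ = zⁿ⁺¹ · (n+1)! δₙ₊₁ · F(n+2, n+2; n+4; w)`, where `(n+1)! δₙ₊₁ = (n+1)²/(n+3) · n! δₙ`.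
So `d_{j+1}` is the `j`-th coefficient of `F(a+1, a+1; c+1) / F(a, a; c)` with `a = n+1`,
`c = n+3`, and the content is the positivity of these coefficients. The quotient factors as
`F(a+1, a+1; c+1)/F(a+1, a; c+1) · F(a, a+1; c+1)/F(a, a; c)`, and Gauss' contiguous relations
turn each factor `S` into a solution of `S = 1 + k x Q S` with `k > 0` and `Q` a ratio of the same
kind (Gauss' continued fraction), which gives positivity by induction on the coefficient index.
Everything converges absolutely on the unit disc, so the identity of formal power series is an
identity of functions there.
-/

open PowerSeries

local notation "𝔠" => (ordinaryHypergeometricCoefficient : ℝ → ℝ → ℝ → ℕ → ℝ)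

section PowerSeries

lemma eq_add_C_mul_X_mul_of_coeff {R : Type*} [CommSemiring R] {f g h : R⟦X⟧} {k : R}
    (h0 : coeff 0 f = coeff 0 g)
    (hsucc : ∀ m, coeff (m + 1) f = coeff (m + 1) g + k * coeff m h) :
    f = g + C k * X * h := by
  ext m
  cases m with
  | zero => simp [h0]
  | succ m => simp [hsucc, mul_assoc, coeff_succ_X_mul]

lemma coeff_pos_of_eq_one_add_C_mul_X_mul {S Q : ℝ⟦X⟧} {k : ℝ} (hk : 0 < k)
    (hS : S = 1 + C k * X * (Q * S)) {m : ℕ} (hQ : ∀ i < m, 0 < coeff i Q) :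
    0 < coeff m S := by
  induction m using Nat.strong_induction_on with
  | _ m ih =>
    cases m with
    | zero => rw [hS]; simp
    | succ m =>
      rw [hS, map_add, coeff_one, if_neg m.succ_ne_zero, zero_add, mul_assoc, coeff_C_mul,
        coeff_succ_X_mul, coeff_mul]
      refine mul_pos hk (Finset.sum_pos (fun p hp => ?_) ⟨(0, m), by simp⟩)
      rw [Finset.HasAntidiagonal.mem_antidiagonal] at hp
      exact mul_pos (hQ p.1 (by omega)) (ih p.2 (by omega) fun i hi => hQ i (by omega))

lemma coeff_mul_pos {p q : ℝ⟦X⟧} (hp : ∀ i, 0 < coeff i p) (hq : ∀ i, 0 < coeff i q)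
    (m : ℕ) : 0 < coeff m (p * q) := by
  rw [coeff_mul]
  exact Finset.sum_pos (fun x _ => mul_pos (hp x.1) (hq x.2)) ⟨(0, m), by simp⟩

lemma coeff_le_coeff_mul {p q : ℝ⟦X⟧} (hp0 : coeff 0 p = 1) (hp : ∀ i, 0 ≤ coeff i p)
    (hq : ∀ i, 0 ≤ coeff i q) (m : ℕ) : coeff m q ≤ coeff m (p * q) := by
  rw [coeff_mul, ← one_mul (coeff m q), ← hp0]
  exact Finset.single_le_sum (f := fun x : ℕ × ℕ => coeff x.1 p * coeff x.2 q)
    (fun x _ => mul_nonneg (hp x.1) (hq x.2)) (a := (0, m)) (by simp)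

noncomputable def evalComplex (p : ℝ⟦X⟧) (w : ℂ) : ℂ := ∑' k, ((coeff k p : ℝ) : ℂ) * w ^ k

lemma evalComplex_mul {p q : ℝ⟦X⟧} {w : ℂ}
    (hp : Summable fun k => ‖((coeff k p : ℝ) : ℂ) * w ^ k‖)
    (hq : Summable fun k => ‖((coeff k q : ℝ) : ℂ) * w ^ k‖) :
    evalComplex (p * q) w = evalComplex p w * evalComplex q w := by
  rw [evalComplex, evalComplex, evalComplex,
    tsum_mul_tsum_eq_tsum_sum_antidiagonal_of_summable_norm hp hq]
  refine tsum_congr fun m => ?_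
  rw [coeff_mul, Complex.ofReal_sum, Finset.sum_mul]
  refine Finset.sum_congr rfl fun x hx => ?_
  rw [Finset.HasAntidiagonal.mem_antidiagonal] at hx
  rw [← hx, pow_add]
  push_cast
  ring

end PowerSeries

section Coefficients

lemma ascPochhammer_succ_eval_left (x : ℝ) (m : ℕ) :
    (ascPochhammer ℝ (m + 1)).eval x = x * (ascPochhammer ℝ m).eval (x + 1) := by
  simp [ascPochhammer_succ_left, Polynomial.eval_comp]

lemma ascPochhammer_eval_add_one {x : ℝ} (hx : x ≠ 0) (m : ℕ) :
    (ascPochhammer ℝ m).eval (x + 1) = (ascPochhammer ℝ m).eval x * (x + m) / x := by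
  rw [eq_div_iff hx, mul_comm, ← ascPochhammer_succ_eval_left, ascPochhammer_succ_eval]

@[simp] lemma ordinaryHypergeometricCoefficient_zero (a b c : ℝ) : 𝔠 a b c 0 = 1 := by
  simp [ordinaryHypergeometricCoefficient]

lemma ordinaryHypergeometricCoefficient_pos {a b c : ℝ} (ha : 0 < a) (hb : 0 < b) (hc : 0 < c)
    (m : ℕ) : 0 < 𝔠 a b c m := by
  have := ascPochhammer_pos m a ha
  have := ascPochhammer_pos m b hb
  have := ascPochhammer_pos m c hc
  positivity

lemma ordinaryHypergeometricCoefficient_comm (a b c : ℝ) (m : ℕ) : 𝔠 a b c m = 𝔠 b a c m := by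
  simp only [ordinaryHypergeometricCoefficient]
  ring

lemma ordinaryHypergeometricCoefficient_succ {a b c : ℝ} (hc : 0 < c) (m : ℕ) :
    𝔠 a b c (m + 1) = a * b / (c * (m + 1)) * 𝔠 (a + 1) (b + 1) (c + 1) m := by
  have := ascPochhammer_pos m (c + 1) (by linarith)
  simp only [ordinaryHypergeometricCoefficient, ascPochhammer_succ_eval_left, Nat.factorial_succ]
  push_cast
  field_simp

lemma ordinaryHypergeometricCoefficient_shift_b {b : ℝ} (a c : ℝ) (hb : b ≠ 0) (m : ℕ) :
    𝔠 a (b + 1) c m = (b + m) / b * 𝔠 a b c m := by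
  simp only [ordinaryHypergeometricCoefficient, ascPochhammer_eval_add_one hb]
  ring

lemma ordinaryHypergeometricCoefficient_shift_c {c : ℝ} (a b : ℝ) (hc : 0 < c) (m : ℕ) :
    𝔠 a b (c + 1) m = c / (c + m) * 𝔠 a b c m := by
  have := ascPochhammer_pos m c hc
  simp only [ordinaryHypergeometricCoefficient, ascPochhammer_eval_add_one hc.ne']
  field_simp

lemma summable_norm_ordinaryHypergeometricCoefficient_mul_pow {a b c : ℝ} (ha : 0 < a)
    (hb : 0 < b) (hc : 0 < c) {w : ℂ} (hw : ‖w‖ < 1) :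
    Summable fun k => ‖(𝔠 a b c k : ℂ) * w ^ k‖ := by
  have hradius := ordinaryHypergeometricSeries_radius_eq_one ℂ a b c fun k =>
    ⟨by linarith [k.cast_nonneg (α := ℝ)], by linarith [k.cast_nonneg (α := ℝ)],
      by linarith [k.cast_nonneg (α := ℝ)]⟩
  have hmem : w ∈ Metric.eball (0 : ℂ) (ordinaryHypergeometricSeries ℂ a b c).radius := by
    rw [hradius, mem_eball_zero_iff, ← ofReal_norm]
    exact ENNReal.ofReal_lt_one.2 hw
  simpa [ordinaryHypergeometricSeries_apply_eq, Complex.real_smul] using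
    (ordinaryHypergeometricSeries ℂ a b c).summable_norm_apply hmem

end Coefficients

namespace Hypergeometric

noncomputable def series (a b c : ℝ) : ℝ⟦X⟧ := PowerSeries.mk (𝔠 a b c)

@[simp] lemma coeff_series (a b c : ℝ) (m : ℕ) : coeff m (series a b c) = 𝔠 a b c m :=
  coeff_mk m _

@[simp] lemma constantCoeff_series (a b c : ℝ) : constantCoeff (series a b c) = 1 := by
  simp [← coeff_zero_eq_constantCoeff_apply]

lemma series_comm (a b c : ℝ) : series a b c = series b a c := by
  ext m
  simp [ordinaryHypergeometricCoefficient_comm a b]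

lemma series_mul_inv_cancel (a b c : ℝ) : series a b c * (series a b c)⁻¹ = 1 :=
  PowerSeries.mul_inv_cancel _ (by simp)

lemma series_inv_mul_cancel (a b c : ℝ) : (series a b c)⁻¹ * series a b c = 1 :=
  PowerSeries.inv_mul_cancel _ (by simp)

lemma series_contiguous_succ_succ {a b c : ℝ} (hb : 0 < b) (hc : 0 < c) :
    series a (b + 1) (c + 1) =
      series a b c + C (a * (c - b) / (c * (c + 1))) * X * series (a + 1) (b + 1) (c + 2) := by
  refine eq_add_C_mul_X_mul_of_coeff (by simp) fun m => ?_
  have hc2 : 𝔠 (a + 1) (b + 1) (c + 2) m =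
      (c + 1) / (c + 1 + m) * 𝔠 (a + 1) (b + 1) (c + 1) m := by
    rw [show c + 2 = c + 1 + 1 by ring, ordinaryHypergeometricCoefficient_shift_c _ _ (by linarith)]
  simp only [coeff_series]
  rw [ordinaryHypergeometricCoefficient_shift_c _ _ hc,
    ordinaryHypergeometricCoefficient_shift_b _ _ hb.ne', ordinaryHypergeometricCoefficient_succ hc,
    hc2]
  generalize 𝔠 (a + 1) (b + 1) (c + 1) m = t
  push_cast
  field_simp
  ring

lemma series_contiguous_succ {a b c : ℝ} (hb : 0 < b) (hc : 0 < c) :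
    series a (b + 1) c = series a b c + C (a / c) * X * series (a + 1) (b + 1) (c + 1) := by
  refine eq_add_C_mul_X_mul_of_coeff (by simp) fun m => ?_
  simp only [coeff_series]
  rw [ordinaryHypergeometricCoefficient_shift_b _ _ hb.ne',
    ordinaryHypergeometricCoefficient_succ hc]
  push_cast
  field_simp

noncomputable def gaussRatio (a b c : ℝ) : ℝ⟦X⟧ := series a (b + 1) (c + 1) * (series a b c)⁻¹

lemma gaussRatio_eq {a b c : ℝ} (hb : 0 < b) (hc : 0 < c) :
    gaussRatio a b c = 1 + C (a * (c - b) / (c * (c + 1))) * X *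
      (gaussRatio (b + 1) a (c + 1) * gaussRatio a b c) := by
  have hquot : gaussRatio (b + 1) a (c + 1) * gaussRatio a b c =
      series (a + 1) (b + 1) (c + 2) * (series a b c)⁻¹ := by
    rw [gaussRatio, gaussRatio, series_comm (b + 1) (a + 1), series_comm (b + 1) a,
      show c + 1 + 1 = c + 2 by ring, mul_assoc, ← mul_assoc (series a (b + 1) (c + 1))⁻¹,
      series_inv_mul_cancel, one_mul]
  rw [hquot, gaussRatio, series_contiguous_succ_succ hb hc, add_mul, series_mul_inv_cancel]
  ring

/-- The recursion `gaussRatio_eq` moves `(a, b, c)` to `(b + 1, a, c + 1)`, which keeps the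
parameters in this range. -/
lemma gaussRatio_coeff_pos (m : ℕ) :
    ∀ {a b c : ℝ}, 0 < a → 0 < b → b < c → a < c + 1 → 0 < coeff m (gaussRatio a b c) := by
  induction m using Nat.strong_induction_on with
  | _ m ih =>
    intro a b c ha hb hbc hac
    have hk : 0 < a * (c - b) / (c * (c + 1)) := by
      have := sub_pos.2 hbc
      have := hb.trans hbc
      positivity
    exact coeff_pos_of_eq_one_add_C_mul_X_mul hk (gaussRatio_eq hb (hb.trans hbc))
      fun i hi => ih i hi (by linarith) ha (by linarith) (by linarith)

noncomputable def contiguousRatio (a b c : ℝ) : ℝ⟦X⟧ := series a (b + 1) c * (series a b c)⁻¹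

lemma contiguousRatio_eq {a b c : ℝ} (hb : 0 < b) (hc : 0 < c) :
    contiguousRatio a b c =
      1 + C (a / c) * X * (gaussRatio (b + 1) a c * contiguousRatio a b c) := by
  have hquot : gaussRatio (b + 1) a c * contiguousRatio a b c =
      series (a + 1) (b + 1) (c + 1) * (series a b c)⁻¹ := by
    rw [gaussRatio, contiguousRatio, series_comm (b + 1) (a + 1), series_comm (b + 1) a,
      mul_assoc, ← mul_assoc (series a (b + 1) c)⁻¹, series_inv_mul_cancel, one_mul]
  rw [hquot, contiguousRatio, series_contiguous_succ hb hc, add_mul, series_mul_inv_cancel]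
  ring

lemma contiguousRatio_coeff_pos {a b c : ℝ} (ha : 0 < a) (hb : 0 < b) (hac : a < c)
    (hbc : b < c) (m : ℕ) : 0 < coeff m (contiguousRatio a b c) :=
  coeff_pos_of_eq_one_add_C_mul_X_mul (by have := ha.trans hac; positivity)
    (contiguousRatio_eq hb (ha.trans hac))
    fun i _ => gaussRatio_coeff_pos i (by linarith) ha hac (by linarith)

noncomputable def shiftRatio (a c : ℝ) : ℝ⟦X⟧ :=
  series (a + 1) (a + 1) (c + 1) * (series a a c)⁻¹

lemma series_mul_shiftRatio (a c : ℝ) :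
    series a a c * shiftRatio a c = series (a + 1) (a + 1) (c + 1) := by
  rw [shiftRatio, mul_comm, mul_assoc, series_inv_mul_cancel, mul_one]

lemma shiftRatio_eq_mul (a c : ℝ) :
    shiftRatio a c = contiguousRatio (a + 1) a (c + 1) * gaussRatio a a c := by
  rw [shiftRatio, contiguousRatio, gaussRatio, series_comm a (a + 1), mul_assoc,
    ← mul_assoc (series (a + 1) a (c + 1))⁻¹, series_inv_mul_cancel, one_mul]

lemma coeff_zero_shiftRatio (a c : ℝ) : coeff 0 (shiftRatio a c) = 1 := by
  simp [shiftRatio]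

lemma shiftRatio_coeff_pos {a c : ℝ} (ha : 0 < a) (hac : a < c) (m : ℕ) :
    0 < coeff m (shiftRatio a c) := by
  rw [shiftRatio_eq_mul]
  exact coeff_mul_pos
    (contiguousRatio_coeff_pos (a := a + 1) (c := c + 1) (by linarith) ha (by linarith)
      (by linarith))
    (fun i => gaussRatio_coeff_pos i ha ha hac (by linarith)) m

lemma shiftRatio_coeff_le {a c : ℝ} (ha : 0 < a) (hac : a < c) (m : ℕ) :
    coeff m (shiftRatio a c) ≤ 𝔠 (a + 1) (a + 1) (c + 1) m := by
  rw [← coeff_series, ← series_mul_shiftRatio]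
  exact coeff_le_coeff_mul (by simp)
    (fun i => by simpa using (ordinaryHypergeometricCoefficient_pos ha ha (ha.trans hac) i).le)
    (fun i => (shiftRatio_coeff_pos ha hac i).le) m

lemma summable_norm_coeff_shiftRatio_mul_pow {a c : ℝ} (ha : 0 < a) (hac : a < c)
    {w : ℂ} (hw : ‖w‖ < 1) :
    Summable fun k => ‖((coeff k (shiftRatio a c) : ℝ) : ℂ) * w ^ k‖ := by
  refine (summable_norm_ordinaryHypergeometricCoefficient_mul_pow (a := a + 1) (b := a + 1)
    (c := c + 1) (by linarith) (by linarith) (by linarith) hw).of_nonneg_of_le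
    (fun _ => norm_nonneg _) fun k => ?_
  have h0 := (shiftRatio_coeff_pos ha hac k).le
  have hle := shiftRatio_coeff_le ha hac k
  rw [norm_mul, norm_mul, Complex.norm_real, Complex.norm_real, Real.norm_of_nonneg h0,
    Real.norm_of_nonneg (h0.trans hle)]
  gcongr

end Hypergeometric

open Nat Hypergeometric

lemma factorial_div_mul_hardyDelta (n k : ℕ) :
    ((k + n)! : ℂ) / k ! * hardyDelta (k + n) =
      n ! * hardyDelta n * (𝔠 ((n : ℝ) + 1) ((n : ℝ) + 1) ((n : ℝ) + 3) k : ℂ) := by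
  have h1 : (ascPochhammer ℝ k).eval ((n : ℝ) + 1) = (k + n)! / n ! := by
    rw [eq_div_iff (by positivity), mul_comm, add_comm k]
    exact_mod_cast factorial_mul_ascPochhammer ℝ n k
  have h3 : (ascPochhammer ℝ k).eval ((n : ℝ) + 3) = (k + n + 1 + 1)! / (n + 1 + 1)! := by
    rw [eq_div_iff (by positivity), mul_comm, show k + n + 1 + 1 = n + 2 + k by ring,
      show (n : ℝ) + 3 = ((n + 2 : ℕ) : ℝ) + 1 by push_cast; ring]
    exact_mod_cast factorial_mul_ascPochhammer ℝ (n + 2) k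
  have hreal : ((k + n)! : ℝ) / k ! * (2 / ((k + n + 1) * (k + n + 2))) =
      n ! * (2 / ((n + 1) * (n + 2))) * 𝔠 ((n : ℝ) + 1) ((n : ℝ) + 1) ((n : ℝ) + 3) k := by
    simp only [ordinaryHypergeometricCoefficient, h1, h3, Nat.factorial_succ]
    push_cast
    field_simp
    ring
  generalize 𝔠 ((n : ℝ) + 1) ((n : ℝ) + 1) ((n : ℝ) + 3) k = t at hreal ⊢
  have hcomplex := congrArg Complex.ofReal hreal
  rw [hardyDelta, hardyDelta]
  push_cast at hcomplex ⊢
  exact hcomplex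

lemma F1_eq_evalComplex (n : ℕ) (u z : ℂ) :
    F1 n u z = z ^ n * (n ! * hardyDelta n) *
      evalComplex (series ((n : ℝ) + 1) ((n : ℝ) + 1) ((n : ℝ) + 3)) (u * z) := by
  rw [F1, evalComplex, ← tsum_mul_left]
  refine tsum_congr fun k => ?_
  rw [factorial_div_mul_hardyDelta, coeff_series, mul_pow, pow_add]
  ring

lemma factorial_succ_mul_hardyDelta (n : ℕ) :
    ((n + 1)! : ℂ) * hardyDelta (n + 1) = ((n + 1) ^ 2 / (n + 3)) * (n ! * hardyDelta n) := by
  have h1 : (n : ℂ) + 1 ≠ 0 := by exact_mod_cast n.succ_ne_zero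
  have h2 : (n : ℂ) + 2 ≠ 0 := by exact_mod_cast (n + 1).succ_ne_zero
  have h3 : (n : ℂ) + 3 ≠ 0 := by exact_mod_cast (n + 2).succ_ne_zero
  rw [Nat.factorial_succ, hardyDelta, hardyDelta]
  push_cast
  rw [show (n : ℂ) + 1 + 1 = n + 2 by ring, show (n : ℂ) + 1 + 2 = n + 3 by ring]
  field_simp

lemma F2_eq_mul_F1 (n : ℕ) {u z : ℂ} (hw : ‖u * z‖ < 1) :
    F2 n u z = ((n + 1) ^ 2 / (n + 3)) * F1 n u z *
      (z * evalComplex (shiftRatio ((n : ℝ) + 1) ((n : ℝ) + 3)) (u * z)) := by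
  have hseries :
      series (((n + 1 : ℕ) : ℝ) + 1) (((n + 1 : ℕ) : ℝ) + 1) (((n + 1 : ℕ) : ℝ) + 3) =
        series ((n : ℝ) + 1) ((n : ℝ) + 1) ((n : ℝ) + 3) *
          shiftRatio ((n : ℝ) + 1) ((n : ℝ) + 3) := by
    rw [series_mul_shiftRatio]
    push_cast
    ring_nf
  have hsum : Summable fun k =>
      ‖((coeff k (series ((n : ℝ) + 1) ((n : ℝ) + 1) ((n : ℝ) + 3)) : ℝ) : ℂ) * (u * z) ^ k‖ := by
    simpa using summable_norm_ordinaryHypergeometricCoefficient_mul_pow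
      (by positivity) (by positivity) (by positivity) hw
  change F1 (n + 1) u z = _
  rw [F1_eq_evalComplex, F1_eq_evalComplex, hseries, evalComplex_mul hsum
    (summable_norm_coeff_shiftRatio_mul_pow (by positivity) (by linarith) hw),
    factorial_succ_mul_hardyDelta]
  ring

theorem stmt18_general (n : ℕ) :
    ∃ d : ℕ → ℝ, (∀ j, 1 ≤ j → 0 < d j) ∧ d 1 = 1 ∧
      ∀ η : ℂ, ‖η‖ = 1 → ∀ b ∈ Metric.ball (0 : ℂ) 1,
        ∃ r > 0, ∀ z : ℂ, ‖z‖ < r →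
          F2 n (η * b) z
            = (((n : ℂ) + 1) ^ 2 / ((n : ℂ) + 3)) * F1 n (η * b) z *
                ∑' j : ℕ, (d (j + 1) : ℂ) * (η * b) ^ j * z ^ (j + 1) := by
  set T := shiftRatio ((n : ℝ) + 1) ((n : ℝ) + 3)
  refine ⟨fun j => coeff (j - 1) T, fun j _ => shiftRatio_coeff_pos (by positivity) (by linarith) _,
    coeff_zero_shiftRatio _ _, fun η hη b hb => ⟨1, one_pos, fun z hz => ?_⟩⟩
  have hw : ‖η * b * z‖ < 1 := by
    rw [norm_mul, norm_mul, hη, one_mul]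
    exact mul_lt_one_of_nonneg_of_lt_one_left (norm_nonneg _) (mem_ball_zero_iff.1 hb) hz.le
  have hsum : ∑' j : ℕ, ((coeff (j + 1 - 1) T : ℝ) : ℂ) * (η * b) ^ j * z ^ (j + 1) =
      z * evalComplex T (η * b * z) := by
    rw [evalComplex, ← tsum_mul_left]
    refine tsum_congr fun j => ?_
    rw [Nat.add_sub_cancel, mul_pow, pow_succ]
    ring
  rw [hsum, F2_eq_mul_F1 n hw]

/-- The power series expansion of `F₂/F₁`: there exist positive reals `d_j`
(`j ≥ 1`, depending only on `n`) with `d₁ = 1` such that near `0`,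
`F₂(z) = ((n+1)²/(n+3)) F₁(z) ∑_{j=1}^∞ d_j (ηb)^{j-1} z^j`. -/
theorem stmt18 (n : ℕ) (hn : 1 ≤ n) :
    ∃ d : ℕ → ℝ, (∀ j, 1 ≤ j → 0 < d j) ∧ d 1 = 1 ∧
      ∀ η : ℂ, ‖η‖ = 1 → ∀ b ∈ Metric.ball (0 : ℂ) 1,
        ∃ r > 0, ∀ z : ℂ, ‖z‖ < r →
          F2 n (η * b) z
            = (((n : ℂ) + 1) ^ 2 / ((n : ℂ) + 3)) * F1 n (η * b) z *
                ∑' j : ℕ, (d (j + 1) : ℂ) * (η * b) ^ j * z ^ (j + 1) :=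
  stmt18_general n
end
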